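/- arXiv:1801.07858 — 4 statements merged into one kernel-verified Lean document; each statement's English description precedes it below -/
import Mathlib

section
/- Let 0 ≤ c(λ) ≤ λ be such that there exists at least one k ∈ ℤ^d with c(λ) ≤ ‖k‖ ≤ λ. Then for every a ∈ L²(𝕋^d) and every eigenbasis (ψ_j)_{j≥1} of L²(𝕋^d), one has (1/#{j : c(λ) ≤ λ_j ≤ λ}) · ∑_{j : c(λ) ≤ λ_j ≤ λ} |∫_{𝕋^d} a|ψ_j|² dx − ∫_{𝕋^d} a dx|² ≤ ∑_{n ∈ ℤ^d, 1 ≤ ‖n‖ ≤ 2λ} |â_n|² · #{k ∈ ℤ^d : ‖k‖ = ‖k+n‖ and c(λ) ≤ ‖k‖ ≤ λ} / #{k ∈ ℤ^d : c(λ) ≤ ‖k‖ ≤ λ}. -/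
open MeasureTheory Real BigOperators ComplexConjugate

noncomputable section

instance : Fact (0 < 2 * π) := ⟨by positivity⟩

/-- The flat torus `𝕋^d = ℝ^d/(2πℤ)^d`. -/
abbrev Td (d : ℕ) := Fin d → AddCircle (2 * π)

/-- The normalized Haar probability measure on the flat torus. -/
def haarT (d : ℕ) : Measure (Td d) :=
  Measure.pi fun _ : Fin d => AddCircle.haarAddCircle

/-- The character `e_k(x) = e^{i⟨k,x⟩}` for `k ∈ ℤ^d`. -/
def eChar {d : ℕ} (k : Fin d → ℤ) (x : Td d) : ℂ := ∏ i, fourier (k i) (x i)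

/-- Euclidean norm of a lattice point of `ℤ^d`. -/
def znorm {d : ℕ} (k : Fin d → ℤ) : ℝ := Real.sqrt (∑ i, ((k i : ℝ)) ^ 2)

/-- The primitive lattice point `n̂` generating `n ≠ 0`: divide out the gcd of coordinates. -/
def primPart {d : ℕ} (n : Fin d → ℤ) : Fin d → ℤ := fun i => n i / Finset.univ.gcd n

/-- Fourier coefficient `â_n = ∫ a(x) e^{-i⟨n,x⟩} dx` of `a ∈ L²(𝕋^d)`. -/
def fcoef {d : ℕ} (a : Td d → ℂ) (n : Fin d → ℤ) : ℂ :=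
  ∫ x, a x * conj (eChar n x) ∂(haarT d)

/-- Fourier transform `μ̂(n) = ∫ e^{-i⟨n,x⟩} dμ(x)` of a measure on `𝕋^d`. -/
def muF {d : ℕ} (μ : Measure (Td d)) (n : Fin d → ℤ) : ℂ :=
  ∫ x, conj (eChar n x) ∂μ

/-- `N(λ) = #{k ∈ ℤ^d : ‖k‖ ≤ λ}`, the spectral counting function. -/
def latticeCount (d : ℕ) (lam : ℝ) : ℕ := Set.ncard {k : Fin d → ℤ | znorm k ≤ lam}

/-- An eigenbasis of `L²(𝕋^d)`: an orthonormal basis `(ψ_j)` of Laplace eigenfunctions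
`ψ_j = ∑_{‖k‖ = Λ j} c_j(k) e_k`, with nondecreasing eigenvalues `(Λ j)²` (nonnegative
integers), orthonormality and completeness expressed via the Fourier coefficients. -/
structure Eigenbasis (d : ℕ) where
  ψ : ℕ → Td d → ℂ
  Λ : ℕ → ℝ
  c : ℕ → (Fin d → ℤ) → ℂ
  nonneg : ∀ j, 0 ≤ Λ j
  mono : Monotone Λ
  eig_int : ∀ j, ∃ E : ℕ, Λ j ^ 2 = E
  repr : ∀ j x, ψ j x = ∑' k : Fin d → ℤ, c j k * eChar k x
  supp : ∀ j k, c j k ≠ 0 → znorm k = Λ j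
  ortho : ∀ i j, ∑' k : Fin d → ℤ, c i k * conj (c j k) = if i = j then 1 else 0
  complete : ∀ k l : Fin d → ℤ, ∑' j : ℕ, c j k * conj (c j l) = if k = l then 1 else 0

/-- A function on the torus is smooth if its `(2πℤ)^d`-periodic lift to `ℝ^d` is `C^∞`. -/
def SmoothOnTorus {d : ℕ} (a : Td d → ℂ) : Prop :=
  ContDiff ℝ (⊤ : ℕ∞) fun x : Fin d → ℝ => a fun i => (x i : AddCircle (2 * π))

/-! For `j` in the window `clam ≤ λ_j ≤ lam` the coefficient vector `c_j` lives on the lattice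
points of the annulus `clam ≤ ‖k‖ ≤ lam`, and the matrix `(c_j(k))` indexed by window and annulus
has orthonormal rows (orthonormality of the basis) and orthonormal columns (completeness); in
particular it is square. Expanding `|ψ_j|²`, the `j`-th variance is the quadratic form
`∑ T_{kl} c_j(k) conj c_j(l)` of the matrix `T_{kl} = â_{l-k}` restricted to `k ≠ l` on a common
sphere. Cauchy–Schwarz bounds its square by `∑_l |(Tᵀ c_j)_l|²`, and summing over `j` the
orthonormal columns turn this into the Hilbert–Schmidt norm `∑ |T_{kl}|²`. Putting `n = l - k`
turns that into the lattice count on the right, with `1 ≤ ‖n‖ ≤ 2 lam`. -/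

open Finset

section Lattice

variable {d : ℕ}

lemma znorm_eq_norm (k : Fin d → ℤ) :
    znorm k = ‖WithLp.toLp 2 (fun i => (k i : ℝ))‖ := by
  simp [znorm, EuclideanSpace.norm_eq]

lemma znorm_sub_le (k l : Fin d → ℤ) : znorm (k - l) ≤ znorm k + znorm l := by
  have hsub : (WithLp.toLp 2 fun i => ((k - l) i : ℝ)) =
      (WithLp.toLp 2 fun i => (k i : ℝ)) - WithLp.toLp 2 fun i => (l i : ℝ) := by
    ext i
    simp
  simpa only [znorm_eq_norm, hsub] using norm_sub_le _ _

lemma abs_le_znorm (k : Fin d → ℤ) (i : Fin d) : |(k i : ℝ)| ≤ znorm k := by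
  rw [← Real.sqrt_sq_eq_abs, znorm]
  exact Real.sqrt_le_sqrt (single_le_sum (fun j _ => sq_nonneg (k j : ℝ)) (mem_univ i))

lemma one_le_znorm {k : Fin d → ℤ} (hk : k ≠ 0) : 1 ≤ znorm k := by
  obtain ⟨i, hi⟩ := Function.ne_iff.mp hk
  calc (1 : ℝ) ≤ |(k i : ℝ)| := by exact_mod_cast Int.one_le_abs hi
    _ ≤ znorm k := abs_le_znorm k i

lemma finite_setOf_znorm_le (R : ℝ) : {k : Fin d → ℤ | znorm k ≤ R}.Finite := by
  refine (Set.Finite.pi fun _ => Set.finite_Icc (-⌈R⌉) ⌈R⌉).subset fun k hk i _ => ?_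
  have : |(k i : ℝ)| ≤ ⌈R⌉ := (abs_le_znorm k i).trans (hk.trans (Int.le_ceil R))
  exact abs_le.mp (by exact_mod_cast this)

def annulus (r R : ℝ) : Finset (Fin d → ℤ) :=
  ((finite_setOf_znorm_le R).subset fun _ hk => hk.2 :
    {k : Fin d → ℤ | r ≤ znorm k ∧ znorm k ≤ R}.Finite).toFinset

@[simp]
lemma mem_annulus {r R : ℝ} {k : Fin d → ℤ} : k ∈ annulus r R ↔ r ≤ znorm k ∧ znorm k ≤ R :=
  Set.Finite.mem_toFinset _

end Lattice

section Characters

variable {d : ℕ}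

instance : IsProbabilityMeasure (haarT d) := by
  unfold haarT
  infer_instance

lemma continuous_eChar (k : Fin d → ℤ) : Continuous (eChar k) :=
  continuous_finsetProd _ fun i _ => (fourier (k i)).continuous.comp (continuous_apply i)

lemma norm_eChar (k : Fin d → ℤ) (x : Td d) : ‖eChar k x‖ = 1 := by
  rw [eChar, norm_prod]
  exact prod_eq_one fun i _ => Circle.norm_coe _

lemma eChar_zero (x : Td d) : eChar 0 x = 1 := by
  simp [eChar]

lemma eChar_mul_conj_eChar (k l : Fin d → ℤ) (x : Td d) :
    eChar k x * conj (eChar l x) = conj (eChar (l - k) x) := by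
  simp only [eChar, map_prod, ← prod_mul_distrib, ← fourier_neg, ← fourier_add,
    Pi.sub_apply]
  congr! 3
  ring

lemma integral_eq_fcoef_zero (a : Td d → ℂ) : ∫ x, a x ∂haarT d = fcoef a 0 := by
  simp [fcoef, eChar_zero]

lemma integrable_mul_conj_eChar {a : Td d → ℂ} (ha : Integrable a (haarT d))
    (k : Fin d → ℤ) : Integrable (fun x => a x * conj (eChar k x)) (haarT d) :=
  ha.mul_bdd (c := 1) (Complex.continuous_conj.comp (continuous_eChar k)).aestronglyMeasurable
    (Filter.Eventually.of_forall fun x => by rw [RCLike.norm_conj, norm_eChar])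

lemma integral_mul_norm_sum_sq {a : Td d → ℂ} (ha : Integrable a (haarT d))
    (s : Finset (Fin d → ℤ)) (c : (Fin d → ℤ) → ℂ) :
    ∫ x, a x * ((‖∑ k ∈ s, c k * eChar k x‖ ^ 2 : ℝ) : ℂ) ∂haarT d =
      ∑ k ∈ s, ∑ l ∈ s, c k * conj (c l) * fcoef a (l - k) := by
  have hexpand : ∀ x, a x * ((‖∑ k ∈ s, c k * eChar k x‖ ^ 2 : ℝ) : ℂ) =
      ∑ k ∈ s, ∑ l ∈ s, c k * conj (c l) * (a x * conj (eChar (l - k) x)) := by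
    intro x
    rw [Complex.ofReal_pow, ← Complex.mul_conj', map_sum, sum_mul_sum, mul_sum]
    refine sum_congr rfl fun k _ => ?_
    rw [mul_sum]
    refine sum_congr rfl fun l _ => ?_
    rw [map_mul, ← eChar_mul_conj_eChar]
    ring
  simp_rw [hexpand]
  rw [integral_finsetSum _ fun k _ => integrable_finsetSum _ fun l _ =>
    (integrable_mul_conj_eChar ha _).const_mul _]
  refine sum_congr rfl fun k _ => ?_
  rw [integral_finsetSum _ fun l _ => (integrable_mul_conj_eChar ha _).const_mul _]
  exact sum_congr rfl fun l _ => integral_const_mul _ _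

end Characters

section UnitaryMatrix

variable {ι κ : Type*}

lemma card_le_card_of_orthonormal [DecidableEq ι] (t : Finset ι) (u : Finset κ)
    (v : ι → κ → ℂ)
    (h : ∀ i ∈ t, ∀ j ∈ t, ∑ k ∈ u, v i k * conj (v j k) = if i = j then 1 else 0) :
    #t ≤ #u := by
  let w : t → EuclideanSpace ℂ u := fun i => WithLp.toLp 2 fun k => conj (v i k)
  have hw : Orthonormal ℂ w := by
    rw [orthonormal_iff_ite]
    intro i j
    simp only [w, PiLp.inner_apply, RCLike.inner_apply, Complex.conj_conj]
    simp_rw [mul_comm (conj (v j _))]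
    rw [sum_coe_sort u fun k => v i k * conj (v j k), h i i.2 j j.2]
    exact if_congr Subtype.ext_iff.symm rfl rfl
  simpa using hw.linearIndependent.fintype_card_le_finrank

lemma norm_sum_sum_mul_conj_sq_le (u : Finset κ) (T : κ → κ → ℂ) (v : κ → ℂ) :
    ‖∑ k ∈ u, ∑ l ∈ u, T k l * v k * conj (v l)‖ ^ 2 ≤
      (∑ l ∈ u, ‖v l‖ ^ 2) * ∑ l ∈ u, ‖∑ k ∈ u, T k l * v k‖ ^ 2 := by
  have hswap : ∑ k ∈ u, ∑ l ∈ u, T k l * v k * conj (v l) =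
      ∑ l ∈ u, conj (v l) * ∑ k ∈ u, T k l * v k := by
    rw [sum_comm]
    exact sum_congr rfl fun l _ => by rw [mul_sum]; exact sum_congr rfl fun k _ => by ring
  calc ‖∑ k ∈ u, ∑ l ∈ u, T k l * v k * conj (v l)‖ ^ 2
      ≤ (∑ l ∈ u, ‖v l‖ * ‖∑ k ∈ u, T k l * v k‖) ^ 2 := by
        rw [hswap]
        gcongr
        refine (norm_sum_le _ _).trans_eq (sum_congr rfl fun l _ => ?_)
        rw [norm_mul, RCLike.norm_conj]
    _ ≤ (∑ l ∈ u, ‖v l‖ ^ 2) * ∑ l ∈ u, ‖∑ k ∈ u, T k l * v k‖ ^ 2 :=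
        sum_mul_sq_le_sq_mul_sq _ _ _

lemma sum_norm_sum_mul_sq_eq [DecidableEq κ] (t : Finset ι) (u : Finset κ) (c : ι → κ → ℂ)
    (hcol : ∀ k ∈ u, ∀ l ∈ u, ∑ j ∈ t, c j k * conj (c j l) = if k = l then 1 else 0)
    (x : κ → ℂ) :
    ∑ j ∈ t, ‖∑ k ∈ u, x k * c j k‖ ^ 2 = ∑ k ∈ u, ‖x k‖ ^ 2 := by
  apply Complex.ofReal_injective
  push_cast
  simp only [← Complex.mul_conj', map_sum, map_mul, sum_mul_sum]
  calc ∑ j ∈ t, ∑ k ∈ u, ∑ l ∈ u, x k * c j k * (conj (x l) * conj (c j l))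
      = ∑ k ∈ u, ∑ l ∈ u, x k * conj (x l) * ∑ j ∈ t, c j k * conj (c j l) := by
        rw [sum_comm]
        refine sum_congr rfl fun k _ => ?_
        rw [sum_comm]
        refine sum_congr rfl fun l _ => ?_
        rw [mul_sum]
        exact sum_congr rfl fun j _ => by ring
    _ = ∑ k ∈ u, x k * conj (x k) := by
        refine sum_congr rfl fun k hk => ?_
        simp [sum_congr rfl fun l hl => congrArg _ (hcol k hk l hl), hk]

lemma sum_norm_quadratic_form_sq_le [DecidableEq κ] (t : Finset ι) (u : Finset κ)
    (c : ι → κ → ℂ) (hrow : ∀ j ∈ t, ∑ k ∈ u, ‖c j k‖ ^ 2 = 1)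
    (hcol : ∀ k ∈ u, ∀ l ∈ u, ∑ j ∈ t, c j k * conj (c j l) = if k = l then 1 else 0)
    (T : κ → κ → ℂ) :
    ∑ j ∈ t, ‖∑ k ∈ u, ∑ l ∈ u, T k l * c j k * conj (c j l)‖ ^ 2 ≤
      ∑ k ∈ u, ∑ l ∈ u, ‖T k l‖ ^ 2 :=
  calc ∑ j ∈ t, ‖∑ k ∈ u, ∑ l ∈ u, T k l * c j k * conj (c j l)‖ ^ 2
      ≤ ∑ j ∈ t, ∑ l ∈ u, ‖∑ k ∈ u, T k l * c j k‖ ^ 2 := sum_le_sum fun j hj => by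
        simpa [hrow j hj] using norm_sum_sum_mul_conj_sq_le u T (c j)
    _ = ∑ k ∈ u, ∑ l ∈ u, ‖T k l‖ ^ 2 := by
        rw [sum_comm, sum_comm (s := u) (t := u)]
        exact sum_congr rfl fun l _ => sum_norm_sum_mul_sq_eq t u c hcol (T · l)

end UnitaryMatrix

lemma tsum_ite_eq_sum_of_mem_iff {α M : Type*} [AddCommMonoid M] [TopologicalSpace M]
    {p : α → Prop} [DecidablePred p] (s : Finset α) (hs : ∀ x, x ∈ s ↔ p x) (f : α → M) :
    ∑' x, (if p x then f x else 0) = ∑ x ∈ s, f x := by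
  rw [tsum_eq_sum fun x hx => if_neg ((hs x).not.1 hx)]
  exact sum_congr rfl fun x hx => if_pos ((hs x).1 hx)

lemma ncard_setOf_eq_card_of_mem_iff {α : Type*} {p : α → Prop} (s : Finset α)
    (hs : ∀ x, x ∈ s ↔ p x) : {x | p x}.ncard = #s := by
  rw [← Set.ncard_coe_finset]
  congr
  ext x
  simp [hs]

namespace Eigenbasis

variable {d : ℕ} (B : Eigenbasis d) {clam lam : ℝ}

lemma c_eq_zero_of_not_mem_annulus {j : ℕ} (hj : clam ≤ B.Λ j ∧ B.Λ j ≤ lam)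
    {k : Fin d → ℤ} (hk : k ∉ annulus clam lam) : B.c j k = 0 := by
  by_contra h
  exact hk (mem_annulus.2 (B.supp j k h ▸ hj))

lemma c_mul_conj_c_eq_zero_of_znorm_ne (j : ℕ) {k l : Fin d → ℤ} (h : znorm k ≠ znorm l) :
    B.c j k * conj (B.c j l) = 0 := by
  by_contra hne
  obtain ⟨hk, hl⟩ := mul_ne_zero_iff.1 hne
  exact h ((B.supp j k hk).trans (B.supp j l (by simpa using hl)).symm)

lemma sum_annulus_c_mul_conj {i : ℕ} (hi : clam ≤ B.Λ i ∧ B.Λ i ≤ lam) (j : ℕ) :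
    ∑ k ∈ annulus clam lam, B.c i k * conj (B.c j k) = if i = j then 1 else 0 := by
  rw [← B.ortho i j]
  exact (tsum_eq_sum fun k hk => by rw [B.c_eq_zero_of_not_mem_annulus hi hk, zero_mul]).symm

lemma finite_window (clam lam : ℝ) : {j | clam ≤ B.Λ j ∧ B.Λ j ≤ lam}.Finite := by
  by_contra h
  obtain ⟨t, hts, ht⟩ := Set.Infinite.exists_subset_card_eq h (#(annulus clam lam) + 1)
  have := card_le_card_of_orthonormal t (annulus clam lam) B.c fun _ hi j _ =>
    B.sum_annulus_c_mul_conj (hts hi) j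
  omega

def window (clam lam : ℝ) : Finset ℕ := (B.finite_window clam lam).toFinset

@[simp]
lemma mem_window {j : ℕ} : j ∈ B.window clam lam ↔ clam ≤ B.Λ j ∧ B.Λ j ≤ lam :=
  Set.Finite.mem_toFinset _

lemma sum_window_c_mul_conj {k l : Fin d → ℤ} (hk : k ∈ annulus clam lam) :
    ∑ j ∈ B.window clam lam, B.c j k * conj (B.c j l) = if k = l then 1 else 0 := by
  rw [← B.complete k l]
  refine (tsum_eq_sum fun j hj => ?_).symm
  by_contra h
  exact hj (B.mem_window.2 (B.supp j k (left_ne_zero_of_mul h) ▸ mem_annulus.1 hk))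

lemma card_window : #(B.window clam lam) = #(annulus clam lam : Finset (Fin d → ℤ)) :=
  le_antisymm
    (card_le_card_of_orthonormal _ _ B.c fun _ hi j _ =>
      B.sum_annulus_c_mul_conj (B.mem_window.1 hi) j)
    (card_le_card_of_orthonormal _ _ (fun k j => B.c j k) fun _ hk _ _ =>
      B.sum_window_c_mul_conj hk)

lemma sum_annulus_norm_c_sq {j : ℕ} (hj : j ∈ B.window clam lam) :
    ∑ k ∈ annulus clam lam, ‖B.c j k‖ ^ 2 = 1 := by
  apply Complex.ofReal_injective
  push_cast
  simp_rw [← Complex.mul_conj']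
  simpa using B.sum_annulus_c_mul_conj (B.mem_window.1 hj) j

lemma ψ_eq_sum_annulus {j : ℕ} (hj : j ∈ B.window clam lam) :
    B.ψ j = fun x => ∑ k ∈ annulus clam lam, B.c j k * eChar k x :=
  funext fun x => (B.repr j x).trans <| tsum_eq_sum fun k hk => by
    rw [B.c_eq_zero_of_not_mem_annulus (B.mem_window.1 hj) hk, zero_mul]

end Eigenbasis

section Variance

variable {d : ℕ}

/-- Matrix entry `∫ a e_k conj e_l` of multiplication by `a - ∫ a`, cut down to pairs
`k ≠ l` on a common sphere: the only pairs that meet in a single eigenfunction. -/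
def sphereCoef (a : Td d → ℂ) (k l : Fin d → ℤ) : ℂ :=
  if znorm k = znorm l ∧ k ≠ l then fcoef a (l - k) else 0

lemma Eigenbasis.integral_mul_norm_ψ_sq_sub (B : Eigenbasis d) {clam lam : ℝ}
    {a : Td d → ℂ} (ha : Integrable a (haarT d)) {j : ℕ} (hj : j ∈ B.window clam lam) :
    (∫ x, a x * ((‖B.ψ j x‖ ^ 2 : ℝ) : ℂ) ∂haarT d) - ∫ x, a x ∂haarT d =
      ∑ k ∈ annulus clam lam, ∑ l ∈ annulus clam lam,
        sphereCoef a k l * B.c j k * conj (B.c j l) := by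
  have hterm : ∀ k l, B.c j k * conj (B.c j l) * fcoef a (l - k) =
      sphereCoef a k l * B.c j k * conj (B.c j l) +
        if k = l then fcoef a 0 * (B.c j k * conj (B.c j l)) else 0 := by
    intro k l
    by_cases hkl : k = l
    · subst hkl
      simp [sphereCoef, mul_comm]
    by_cases hsph : znorm k = znorm l
    · simp only [sphereCoef, hsph, hkl, ne_eq, not_false_eq_true, and_self, if_true, if_false,
        add_zero]
      ring
    · simp [sphereCoef, hkl, hsph, B.c_mul_conj_c_eq_zero_of_znorm_ne j hsph]
  have hdiag : ∑ k ∈ annulus clam lam, ∑ l ∈ annulus clam lam,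
      (if k = l then fcoef a 0 * (B.c j k * conj (B.c j l)) else 0) = fcoef a 0 := by
    rw [sum_congr rfl fun k hk => by rw [sum_ite_eq, if_pos hk], ← mul_sum,
      B.sum_annulus_c_mul_conj (B.mem_window.1 hj) j, if_pos rfl, mul_one]
  rw [B.ψ_eq_sum_annulus hj, integral_mul_norm_sum_sq ha, integral_eq_fcoef_zero]
  simp_rw [hterm, sum_add_distrib, hdiag, add_sub_cancel_right]

lemma sum_annulus_norm_sphereCoef_sq (a : Td d → ℂ) {clam lam : ℝ} {k : Fin d → ℤ}
    (hk : k ∈ annulus clam lam) :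
    ∑ l ∈ annulus clam lam, ‖sphereCoef a k l‖ ^ 2 =
      ∑ n ∈ annulus 1 (2 * lam), if znorm k = znorm (k + n) then ‖fcoef a n‖ ^ 2 else 0 := by
  have hsq : ∀ l, ‖sphereCoef a k l‖ ^ 2 =
      if znorm k = znorm l ∧ k ≠ l then ‖fcoef a (l - k)‖ ^ 2 else 0 := fun l => by
    unfold sphereCoef
    split_ifs <;> simp
  simp_rw [hsq, ← sum_filter]
  refine sum_nbij' (· - k) (k + ·) (fun l hl => ?_) (fun n hn => ?_) (fun l _ => by simp)
    (fun n _ => by simp) (fun l _ => by simp)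
  · simp only [mem_filter, mem_annulus] at hl hk ⊢
    obtain ⟨⟨-, hl⟩, hsph, hkl⟩ := hl
    refine ⟨⟨one_le_znorm (sub_ne_zero.2 (Ne.symm hkl)), ?_⟩, by simpa using hsph⟩
    linarith [znorm_sub_le l k]
  · simp only [mem_filter, mem_annulus] at hn hk ⊢
    obtain ⟨⟨hn, -⟩, hsph⟩ := hn
    refine ⟨hsph ▸ hk, hsph, fun h => ?_⟩
    obtain rfl : n = 0 := by simpa using h
    norm_num [znorm] at hn

lemma sum_annulus_sum_norm_sphereCoef_sq (a : Td d → ℂ) (clam lam : ℝ) :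
    ∑ k ∈ annulus clam lam, ∑ l ∈ annulus clam lam, ‖sphereCoef a k l‖ ^ 2 =
      ∑ n ∈ annulus 1 (2 * lam),
        ‖fcoef a n‖ ^ 2 * #{k ∈ annulus clam lam | znorm k = znorm (k + n)} := by
  rw [sum_congr rfl fun k hk => sum_annulus_norm_sphereCoef_sq a hk, sum_comm]
  refine sum_congr rfl fun n _ => ?_
  rw [← sum_filter, sum_const, nsmul_eq_mul, mul_comm]

end Variance

theorem statement4_general (d : ℕ) (clam lam : ℝ)
    (a : Td d → ℂ) (ha : MemLp a 2 (haarT d)) (B : Eigenbasis d) :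
    (1 / (Set.ncard {j : ℕ | clam ≤ B.Λ j ∧ B.Λ j ≤ lam} : ℝ)) *
        (∑' j : ℕ, if clam ≤ B.Λ j ∧ B.Λ j ≤ lam then
          ‖(∫ x, a x * ((‖B.ψ j x‖ ^ 2 : ℝ) : ℂ) ∂(haarT d)) - ∫ x, a x ∂(haarT d)‖ ^ 2
          else 0)
      ≤ ∑' n : Fin d → ℤ,
          if 1 ≤ znorm n ∧ znorm n ≤ 2 * lam then
            ‖fcoef a n‖ ^ 2 *
              ((Set.ncard {k : Fin d → ℤ |
                  znorm k = znorm (k + n) ∧ clam ≤ znorm k ∧ znorm k ≤ lam} : ℝ) /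
                (Set.ncard {k : Fin d → ℤ | clam ≤ znorm k ∧ znorm k ≤ lam} : ℝ))
          else 0 := by
  classical
  set A : Finset (Fin d → ℤ) := annulus clam lam
  rw [tsum_ite_eq_sum_of_mem_iff _ fun _ => B.mem_window,
    tsum_ite_eq_sum_of_mem_iff _ fun _ => mem_annulus,
    ncard_setOf_eq_card_of_mem_iff _ fun _ => B.mem_window,
    ncard_setOf_eq_card_of_mem_iff A fun _ => mem_annulus, B.card_window]
  calc 1 / (#A : ℝ) * ∑ j ∈ B.window clam lam,
        ‖(∫ x, a x * ((‖B.ψ j x‖ ^ 2 : ℝ) : ℂ) ∂haarT d) - ∫ x, a x ∂haarT d‖ ^ 2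
      = 1 / (#A : ℝ) * ∑ j ∈ B.window clam lam,
          ‖∑ k ∈ A, ∑ l ∈ A, sphereCoef a k l * B.c j k * conj (B.c j l)‖ ^ 2 := by
        rw [sum_congr rfl fun j hj => by
          rw [B.integral_mul_norm_ψ_sq_sub (ha.integrable one_le_two) hj]]
    _ ≤ 1 / (#A : ℝ) * ∑ k ∈ A, ∑ l ∈ A, ‖sphereCoef a k l‖ ^ 2 := by
        gcongr
        exact sum_norm_quadratic_form_sq_le _ _ _ (fun _ => B.sum_annulus_norm_c_sq)
          (fun _ hk _ _ => B.sum_window_c_mul_conj hk) _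
    _ = ∑ n ∈ annulus 1 (2 * lam), ‖fcoef a n‖ ^ 2 *
          (#{k ∈ A | znorm k = znorm (k + n)} / #A) := by
        rw [sum_annulus_sum_norm_sphereCoef_sq, mul_sum]
        exact sum_congr rfl fun n _ => by ring
    _ = _ := sum_congr rfl fun n _ => by
        rw [ncard_setOf_eq_card_of_mem_iff {k ∈ A | znorm k = znorm (k + n)} fun k => by
          simp [A, and_comm]]

/-- quantum variance bounded by lattice point counts (Proposition on moments). -/
theorem statement4 (d : ℕ) (hd : 2 ≤ d) (clam lam : ℝ) (hc0 : 0 ≤ clam) (hclam : clam ≤ lam)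
    (hne : ∃ k : Fin d → ℤ, clam ≤ znorm k ∧ znorm k ≤ lam)
    (a : Td d → ℂ) (ha : MemLp a 2 (haarT d)) (B : Eigenbasis d) :
    (1 / (Set.ncard {j : ℕ | clam ≤ B.Λ j ∧ B.Λ j ≤ lam} : ℝ)) *
        (∑' j : ℕ, if clam ≤ B.Λ j ∧ B.Λ j ≤ lam then
          ‖(∫ x, a x * ((‖B.ψ j x‖ ^ 2 : ℝ) : ℂ) ∂(haarT d)) - ∫ x, a x ∂(haarT d)‖ ^ 2
          else 0)
      ≤ ∑' n : Fin d → ℤ,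
          if 1 ≤ znorm n ∧ znorm n ≤ 2 * lam then
            ‖fcoef a n‖ ^ 2 *
              ((Set.ncard {k : Fin d → ℤ |
                  znorm k = znorm (k + n) ∧ clam ≤ znorm k ∧ znorm k ≤ lam} : ℝ) /
                (Set.ncard {k : Fin d → ℤ | clam ≤ znorm k ∧ znorm k ≤ lam} : ℝ))
          else 0 :=
  statement4_general d clam lam a ha B
end
end

section
/- Let d ≥ 2 and α ≥ 0. There exists a constant C > 0 depending only on d and α such that for every λ ≥ 2, ∑_{n ∈ ℤ^d, 1 ≤ ‖n‖ ≤ λ} 1/(‖n̂‖ · ‖n‖^α) ≤ C (log λ)² λ^{max(d−1−α, 0)}. -/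
open MeasureTheory Real BigOperators ComplexConjugate

noncomputable section

/-!
Write `n = g n̂` with `g` the gcd of the coordinates, so `‖n‖ = g ‖n̂‖`. Then
`1 / (‖n̂‖ ‖n‖^α) = ‖n‖^(d-1-α) / (g^(d-1) ‖n̂‖^d) ≤ λ^max(d-1-α,0) / (g^(d-1) ‖n̂‖^d)`,
and since `n ↦ (g, n̂)` is injective the sum is at most `λ^max(d-1-α,0)` times the product
`(∑_{g ≤ λ} g^(1-d)) (∑_{0 < |p|_∞ ≤ λ} ‖p‖^(-d))`. Both factors are `O(log λ)`: the first because
`d ≥ 2`, the second because the shell `|p|_∞ = k` has `O(k^(d-1))` points, each contributing at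
most `k^(-d)`.
-/

open Finset

section LatticeNorm

variable {d : ℕ}

lemma znorm_nonneg (k : Fin d → ℤ) : 0 ≤ znorm k := Real.sqrt_nonneg _

@[simp] lemma znorm_zero : znorm (0 : Fin d → ℤ) = 0 := by simp [znorm]

lemma znorm_const_mul (g : ℤ) (p : Fin d → ℤ) :
    znorm (fun i => g * p i) = |(g : ℝ)| * znorm p := by
  simp only [znorm, Int.cast_mul, mul_pow, ← mul_sum, Real.sqrt_mul (sq_nonneg _),
    Real.sqrt_sq_eq_abs]

lemma natAbs_gcd_mul_primPart (n : Fin d → ℤ) :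
    (fun i => ((univ.gcd n).natAbs : ℤ) * primPart n i) = n := by
  funext i
  rw [Int.natAbs_of_nonneg (Int.nonneg_of_normalize_eq_self normalize_gcd)]
  exact Int.mul_ediv_cancel' (gcd_dvd (mem_univ i))

lemma znorm_eq_natAbs_gcd_mul (n : Fin d → ℤ) :
    znorm n = ((univ.gcd n).natAbs : ℝ) * znorm (primPart n) := by
  conv_lhs => rw [← natAbs_gcd_mul_primPart n]
  rw [znorm_const_mul, Int.cast_natCast, abs_of_nonneg (Nat.cast_nonneg _)]

lemma natAbs_gcd_ne_zero {n : Fin d → ℤ} (hn : n ≠ 0) : (univ.gcd n).natAbs ≠ 0 := by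
  intro h
  apply hn
  rw [← natAbs_gcd_mul_primPart n, h]
  simp [Pi.zero_def]

lemma primPart_ne_zero {n : Fin d → ℤ} (hn : n ≠ 0) : primPart n ≠ 0 := by
  intro h
  apply hn
  rw [← natAbs_gcd_mul_primPart n, h]
  simp [Pi.zero_def]

lemma injective_natAbs_gcd_primPart :
    Function.Injective fun n : Fin d → ℤ => ((univ.gcd n).natAbs, primPart n) := by
  intro m n h
  rw [← natAbs_gcd_mul_primPart m, ← natAbs_gcd_mul_primPart n]
  simp only [Prod.mk.injEq] at h
  rw [h.1, h.2]

end LatticeNorm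

section LatticeBox

variable {d : ℕ}

def latticeBox (d N : ℕ) : Finset (Fin d → ℤ) := Fintype.piFinset fun _ => Icc (-N : ℤ) N

lemma mem_latticeBox {N : ℕ} {p : Fin d → ℤ} : p ∈ latticeBox d N ↔ ∀ i, |p i| ≤ N := by
  simp [latticeBox, abs_le]

lemma latticeBox_mono : Monotone (latticeBox d) := fun _ _ hab _ hp =>
  mem_latticeBox.2 fun i => (mem_latticeBox.1 hp i).trans (by exact_mod_cast hab)

lemma mem_latticeBox_of_znorm_le {N : ℕ} {p : Fin d → ℤ} (h : znorm p ≤ N) :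
    p ∈ latticeBox d N :=
  mem_latticeBox.2 fun i => by exact_mod_cast (abs_le_znorm p i).trans h

lemma add_one_le_znorm_of_notMem_latticeBox {k : ℕ} {p : Fin d → ℤ}
    (hp : p ∉ latticeBox d k) : (k + 1 : ℝ) ≤ znorm p := by
  obtain ⟨i, hi⟩ := not_forall.1 (mt mem_latticeBox.2 hp)
  calc (k + 1 : ℝ) ≤ |(p i : ℝ)| := by exact_mod_cast (not_le.1 hi)
    _ ≤ znorm p := abs_le_znorm p i

lemma latticeBox_zero : latticeBox d 0 = {0} := by
  ext p
  simp [mem_latticeBox, funext_iff]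

lemma card_latticeBox (N : ℕ) : #(latticeBox d N) = (2 * N + 1) ^ d := by
  simp only [latticeBox, Fintype.card_piFinset, Int.card_Icc, prod_const, card_univ,
    Fintype.card_fin]
  congr 1
  omega

lemma card_latticeBox_succ_sdiff_le (k : ℕ) :
    #(latticeBox d (k + 1) \ latticeBox d k) ≤ 2 * d * (2 * k + 3) ^ (d - 1) := by
  have hle : (2 * k + 1) ^ d ≤ (2 * k + 3) ^ d := Nat.pow_le_pow_left (by omega) d
  have h := abs_pow_sub_pow_le (α := ℤ) (2 * k + 3) (2 * k + 1) d
  rw [card_sdiff_of_subset (latticeBox_mono k.le_succ), card_latticeBox, card_latticeBox]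
  zify [hle]
  grind

lemma sum_latticeBox_inv_znorm_pow_le (hd : 1 ≤ d) (N : ℕ) :
    ∑ p ∈ latticeBox d N, (znorm p ^ d)⁻¹ ≤ 2 * d * 3 ^ (d - 1) * (harmonic N : ℝ) := by
  have hd0 : d ≠ 0 := by omega
  calc ∑ p ∈ latticeBox d N, (znorm p ^ d)⁻¹
      = ∑ k ∈ range N, ∑ p ∈ latticeBox d (k + 1) \ latticeBox d k, (znorm p ^ d)⁻¹ := by
        -- the centre `p = 0` drops out because `(0 ^ d)⁻¹ = 0`
        rw [sum_eq_sum_range_sdiff _ latticeBox_mono]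
        simp [latticeBox_zero, hd0]
    _ ≤ ∑ k ∈ range N, ∑ _p ∈ latticeBox d (k + 1) \ latticeBox d k, ((k + 1 : ℝ) ^ d)⁻¹ := by
        gcongr with k _ p hp
        exact add_one_le_znorm_of_notMem_latticeBox (mem_sdiff.1 hp).2
    _ ≤ ∑ k ∈ range N, (2 * d * (3 * (k + 1)) ^ (d - 1) : ℝ) * ((k + 1 : ℝ) ^ d)⁻¹ := by
        simp only [sum_const, nsmul_eq_mul]
        gcongr with k
        refine (Nat.cast_le.2 (card_latticeBox_succ_sdiff_le k)).trans ?_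
        push_cast
        gcongr
        linarith
    _ = 2 * d * 3 ^ (d - 1) * (harmonic N : ℝ) := by
        push_cast [harmonic]
        rw [mul_sum]
        refine sum_congr rfl fun k _ => ?_
        rw [mul_pow, ← pow_sub_one_mul hd0 ((k : ℝ) + 1)]
        field_simp
end LatticeBox

lemma rpow_le_rpow_max_zero {x lam : ℝ} (hx : 1 ≤ x) (hxlam : x ≤ lam) (β : ℝ) :
    x ^ β ≤ lam ^ max β 0 :=
  (Real.rpow_le_rpow_of_exponent_le hx (le_max_left β 0)).trans
    (Real.rpow_le_rpow (by linarith) hxlam (le_max_right β 0))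

lemma one_div_mul_rpow_le {G P lam α : ℝ} {d : ℕ} (hd : 1 ≤ d) (hG : 0 < G) (hP : 0 < P)
    (h1 : 1 ≤ G * P) (hlam : G * P ≤ lam) :
    1 / (P * (G * P) ^ α) ≤
      lam ^ max ((d : ℝ) - 1 - α) 0 * ((G ^ (d - 1))⁻¹ * (P ^ d)⁻¹) := by
  have hGP : 0 < G * P := mul_pos hG hP
  have hsplit : 1 / (P * (G * P) ^ α) =
      (G * P) ^ ((d : ℝ) - 1 - α) * ((G ^ (d - 1))⁻¹ * (P ^ d)⁻¹) := by
    rw [Real.rpow_sub hGP, ← Nat.cast_pred hd, Real.rpow_natCast, mul_pow,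
      ← pow_sub_one_mul (by omega : d ≠ 0) P]
    field_simp
  rw [hsplit]
  gcongr
  exact rpow_le_rpow_max_zero h1 hlam _

lemma sum_Icc_inv_pow_le_harmonic {k : ℕ} (hk : 1 ≤ k) (N : ℕ) :
    ∑ m ∈ Icc 1 N, ((m : ℝ) ^ k)⁻¹ ≤ harmonic N := by
  rw [harmonic_eq_sum_Icc]
  push_cast
  gcongr with m hm
  · exact_mod_cast (mem_Icc.1 hm).1
  · exact le_self_pow₀ (by exact_mod_cast (mem_Icc.1 hm).1) (by omega)

lemma harmonic_natCeil_le {lam : ℝ} (hlam : 2 ≤ lam) :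
    (harmonic ⌈lam⌉₊ : ℝ) ≤ 4 * Real.log lam := by
  have hlog2 := Real.log_two_gt_d9
  have hlog : Real.log 2 ≤ Real.log lam := Real.log_le_log (by norm_num) hlam
  have hceil : Real.log ⌈lam⌉₊ ≤ Real.log 2 + Real.log lam := by
    rw [← Real.log_mul (by norm_num) (by linarith)]
    have := Nat.ceil_lt_add_one (by linarith : 0 ≤ lam)
    exact Real.log_le_log (by positivity) (by linarith)
  linarith [harmonic_le_one_add_log ⌈lam⌉₊]

lemma tsum_ite_le_mul_sum_mul_sum {d : ℕ} (hd : 1 ≤ d) (α : ℝ) {lam : ℝ} (hlam : 0 ≤ lam)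
    {N : ℕ} (hN : lam ≤ N) :
    (∑' n : Fin d → ℤ,
        if 1 ≤ znorm n ∧ znorm n ≤ lam then 1 / (znorm (primPart n) * znorm n ^ α) else 0)
      ≤ lam ^ max ((d : ℝ) - 1 - α) 0 *
          ((∑ g ∈ Icc 1 N, ((g : ℝ) ^ (d - 1))⁻¹) * ∑ p ∈ latticeBox d N, (znorm p ^ d)⁻¹) := by
  classical
  set F : ℕ × (Fin d → ℤ) → ℝ := fun q =>
    lam ^ max ((d : ℝ) - 1 - α) 0 * (((q.1 : ℝ) ^ (d - 1))⁻¹ * (znorm q.2 ^ d)⁻¹)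
  set φ : (Fin d → ℤ) → ℕ × (Fin d → ℤ) := fun n => ((univ.gcd n).natAbs, primPart n)
  set T := (latticeBox d N).filter fun n => 1 ≤ znorm n ∧ znorm n ≤ lam
  have hsupp : ∀ n ∉ latticeBox d N, (if 1 ≤ znorm n ∧ znorm n ≤ lam then
      1 / (znorm (primPart n) * znorm n ^ α) else 0) = 0 := fun n hn =>
    if_neg fun h => hn (mem_latticeBox_of_znorm_le (h.2.trans hN))
  have hfactor : ∀ n ∈ T, 1 ≤ ((univ.gcd n).natAbs : ℝ) ∧ 1 ≤ znorm (primPart n) ∧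
      ((univ.gcd n).natAbs : ℝ) * znorm (primPart n) ≤ lam := by
    intro n hn
    obtain ⟨-, h1, h2⟩ := mem_filter.1 hn
    have hn0 : n ≠ 0 := by rintro rfl; norm_num at h1
    refine ⟨?_, one_le_znorm (primPart_ne_zero hn0), znorm_eq_natAbs_gcd_mul n ▸ h2⟩
    exact_mod_cast Nat.one_le_iff_ne_zero.2 (natAbs_gcd_ne_zero hn0)
  have hbound : ∀ n ∈ T, 1 / (znorm (primPart n) * znorm n ^ α) ≤ F (φ n) := by
    intro n hn
    obtain ⟨hG, hP, hGP⟩ := hfactor n hn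
    rw [znorm_eq_natAbs_gcd_mul n]
    exact one_div_mul_rpow_le hd (by linarith) (by linarith)
      (one_le_mul_of_one_le_of_one_le hG hP) hGP
  have hmaps : ∀ n ∈ T, φ n ∈ Icc 1 N ×ˢ latticeBox d N := by
    intro n hn
    obtain ⟨hG, hP, hGP⟩ := hfactor n hn
    refine mem_product.2 ⟨mem_Icc.2 ⟨by exact_mod_cast hG, ?_⟩, mem_latticeBox_of_znorm_le ?_⟩
    · exact_mod_cast ((le_mul_of_one_le_right (by linarith) hP).trans hGP).trans hN
    · exact ((le_mul_of_one_le_left (by linarith) hG).trans hGP).trans hN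
  rw [tsum_eq_sum hsupp, ← sum_filter, sum_mul_sum, ← sum_product', mul_sum]
  calc ∑ n ∈ T, 1 / (znorm (primPart n) * znorm n ^ α)
      ≤ ∑ n ∈ T, F (φ n) := sum_le_sum hbound
    _ = ∑ q ∈ T.image φ, F q :=
        (sum_image fun _ _ _ _ h => injective_natAbs_gcd_primPart h).symm
    _ ≤ ∑ q ∈ Icc 1 N ×ˢ latticeBox d N, F q :=
        sum_le_sum_of_subset_of_nonneg (image_subset_iff.2 hmaps) fun q _ _ =>
          mul_nonneg (Real.rpow_nonneg hlam _) (by have := znorm_nonneg q.2; positivity)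

theorem statement11_general (d : ℕ) (hd : 2 ≤ d) (α : ℝ) :
    ∃ C : ℝ, 0 < C ∧ ∀ lam : ℝ, 2 ≤ lam →
      (∑' n : Fin d → ℤ,
          if 1 ≤ znorm n ∧ znorm n ≤ lam then
            1 / (znorm (primPart n) * znorm n ^ α) else 0)
        ≤ C * Real.log lam ^ 2 * lam ^ max ((d : ℝ) - 1 - α) 0 := by
  refine ⟨16 * (2 * d * 3 ^ (d - 1)), by positivity, fun lam hlam => ?_⟩
  set N := ⌈lam⌉₊
  have hH : (harmonic N : ℝ) ≤ 4 * Real.log lam := harmonic_natCeil_le hlam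
  have hA := sum_Icc_inv_pow_le_harmonic (by omega : 1 ≤ d - 1) N
  have hB := sum_latticeBox_inv_znorm_pow_le (by omega : 1 ≤ d) N
  calc _ ≤ lam ^ max ((d : ℝ) - 1 - α) 0 *
          ((∑ g ∈ Icc 1 N, ((g : ℝ) ^ (d - 1))⁻¹) * ∑ p ∈ latticeBox d N, (znorm p ^ d)⁻¹) :=
        tsum_ite_le_mul_sum_mul_sum (by omega) α (by linarith) (Nat.le_ceil lam)
    _ ≤ lam ^ max ((d : ℝ) - 1 - α) 0 *
          ((4 * Real.log lam) * (2 * d * 3 ^ (d - 1) * (4 * Real.log lam))) := by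
        gcongr
        · exact sum_nonneg fun p _ => by have := znorm_nonneg p; positivity
        · linarith [Real.log_nonneg (by linarith : (1 : ℝ) ≤ lam)]
        · exact hA.trans hH
        · exact hB.trans (by gcongr)
    _ = _ := by ring

/-- the arithmetic sum `∑ 1/(‖n̂‖ ‖n‖^α)` over the ball of radius `λ`. -/
theorem statement11 (d : ℕ) (hd : 2 ≤ d) (α : ℝ) (hα : 0 ≤ α) :
    ∃ C : ℝ, 0 < C ∧ ∀ lam : ℝ, 2 ≤ lam →
      (∑' n : Fin d → ℤ,
          if 1 ≤ znorm n ∧ znorm n ≤ lam then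
            1 / (znorm (primPart n) * znorm n ^ α) else 0)
        ≤ C * Real.log lam ^ 2 * lam ^ max ((d : ℝ) - 1 - α) 0 :=
  statement11_general d hd α
end
end

section
/- There exists a constant C_d > 0 depending only on d such that for every probability measure μ on 𝕋^d, every continuous function a on 𝕋^d, every eigenbasis (ψ_j)_{j≥1} of L²(𝕋^d), and every λ > 0, one has (1/N(λ)) · ∑_{j : λ_j ≤ λ} |∫_{𝕋^d} a|ψ_j|² dμ − ∫_{𝕋^d} a dμ|² ≤ (C_d/λ) · ∑_{n ∈ ℤ^d, 1 ≤ ‖n‖ ≤ 2λ} |∫_{𝕋^d} a(x) e^{−i⟨n,x⟩} dμ(x)|² / ‖n̂‖. -/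
open MeasureTheory Real BigOperators ComplexConjugate

noncomputable section

/-!
Write `ψ_j = ∑ c_j(k) e_k` with `c_j` supported on the sphere `‖k‖ = λ_j`. Then
`∫ a |ψ_j|² dμ - ∫ a dμ = ⟨c_j, T c_j⟩`, where `T_{lk} = (a μ)^(l - k)` for distinct `l, k` on a
common sphere and `T_{lk} = 0` otherwise. The `c_j` with `λ_j ≤ λ` are orthonormal, so Bessel's
inequality bounds the variance sum by the Hilbert–Schmidt norm `∑_{l,k} |T_{lk}|²`; grouping the
pairs by `n = l - k` turns it into `∑_n M(n) |(a μ)^(n)|²` with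
`M(n) = #{k : ‖k‖ ≤ λ, ‖k + n‖ = ‖k‖}`. These `k` lie on a hyperplane `⟨n̂, k⟩ = const`, and
counting its points in a cube coordinate by coordinate, through linear congruences, gives
`|n̂|_∞ M(n) ≲ λ^(d-1)`, i.e. `M(n) ≲ N(λ) / (λ ‖n̂‖)`.
-/

open Finset

namespace QuantumVariance

lemma eq_of_update_eq_of_apply_eq {ι β : Type*} [DecidableEq ι] {k k' : ι → β} {i : ι} {a : β}
    (h : Function.update k i a = Function.update k' i a) (hi : k i = k' i) : k = k' := by
  rw [← Function.update_eq_self i k, ← Function.update_eq_self i k',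
    ← Function.update_idem a (k i) k, ← Function.update_idem a (k' i) k', h, hi]

section Counting

variable {ι : Type*} [Fintype ι] [DecidableEq ι]

lemma card_mul_le_of_modEq {K s : ℤ} (hK : 0 ≤ K) (hs : 0 < s) {X : Finset ℤ}
    (hX : X ⊆ Icc (-K) K) (hmod : ∀ x ∈ X, ∀ y ∈ X, x ≡ y [ZMOD s]) :
    (#X : ℤ) * s ≤ 2 * K + s := by
  -- `x ↦ ⌊(x + K) / s⌋` is injective on a single residue class
  have hcard : #X ≤ #(Icc 0 (2 * K / s)) := by
    refine card_le_card_of_injOn (fun x => (x + K) / s) (fun x hx => ?_)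
      (fun x hx y hy hxy => ?_)
    · obtain ⟨h1, h2⟩ := mem_Icc.1 (hX hx)
      exact mem_Icc.2 ⟨Int.ediv_nonneg (by omega) hs.le, Int.ediv_le_ediv hs (by omega)⟩
    · have hrem : (x + K) % s = (y + K) % s := (hmod x hx y hy).add_right K
      have : x + K = y + K := by
        rw [← Int.mul_ediv_add_emod (x + K) s, ← Int.mul_ediv_add_emod (y + K) s, hrem]
        exact congrArg (s * · + (y + K) % s) hxy
      omega
  have hIcc : (#(Icc 0 (2 * K / s)) : ℤ) = 2 * K / s + 1 := by
    rw [Int.card_Icc]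
    have := Int.ediv_nonneg (by omega : 0 ≤ 2 * K) hs.le
    omega
  calc (#X : ℤ) * s ≤ (2 * K / s + 1) * s := by
        rw [← hIcc]; exact mul_le_mul_of_nonneg_right (by exact_mod_cast hcard) hs.le
    _ = 2 * K / s * s + s := by ring
    _ ≤ 2 * K + s := by linarith [Int.ediv_mul_le (2 * K) hs.ne']

lemma card_filter_dvd_add_mul_mul_le {K Q : ℤ} (hK : 0 ≤ K) (hQ : 0 < Q) (a b : ℤ) :
    (#{x ∈ Icc (-K) K | Q ∣ a + b * x} : ℤ) * (Q / Int.gcd Q b) ≤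
      2 * K + Q / Int.gcd Q b := by
  refine card_mul_le_of_modEq hK ?_ (filter_subset _ _) fun x hx y hy => ?_
  · exact Int.ediv_pos_of_pos_of_dvd hQ (by positivity) (Int.gcd_dvd_left ..)
  · refine Int.ModEq.cancel_left_div_gcd hQ ((Int.modEq_iff_dvd).2 ?_)
    have := dvd_sub (mem_filter.1 hy).2 (mem_filter.1 hx).2
    rwa [add_sub_add_left_eq_sub] at this

def boxOn (s : Finset ι) (K : ℤ) : Finset (ι → ℤ) :=
  Fintype.piFinset fun i => if i ∈ s then Icc (-K) K else {0}

lemma sum_mul_update_zero (q k : ι → ℤ) (i : ι) :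
    ∑ u, q u * Function.update k i 0 u = ∑ u, q u * k u - q i * k i := by
  rw [eq_sub_iff_add_eq, ← Fintype.sum_ite_eq' i (fun u => q u * k u), ← sum_add_distrib]
  refine sum_congr rfl fun u _ => ?_
  by_cases h : u = i <;> simp [h]

lemma update_mem_boxOn_of_mem_boxOn_insert {s : Finset ι} {K : ℤ} {i : ι} (hi : i ∉ s)
    {k : ι → ℤ} (hk : k ∈ boxOn (insert i s) K) : Function.update k i 0 ∈ boxOn s K := by
  simp only [boxOn, Fintype.mem_piFinset] at hk ⊢
  intro u
  by_cases hu : u = i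
  · subst hu; simp [hi]
  · simpa [Function.update_of_ne hu, hu] using hk u

lemma card_filter_update_eq_mul_le {K Q c : ℤ} (hK : 0 ≤ K) (hQ : 0 < Q) {q : ι → ℤ} {i : ι}
    {S : Finset (ι → ℤ)} (hS : ∀ k ∈ S, k i ∈ Icc (-K) K ∧ Q ∣ ∑ u, q u * k u - c)
    (k₀ : ι → ℤ) :
    (#{k ∈ S | Function.update k i 0 = k₀} : ℤ) * (Q / Int.gcd Q (q i)) ≤
      2 * K + Q / Int.gcd Q (q i) := by
  have hle : #{k ∈ S | Function.update k i 0 = k₀} ≤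
      #{x ∈ Icc (-K) K | Q ∣ (∑ u, q u * k₀ u - c) + q i * x} := by
    refine card_le_card_of_injOn (fun k => k i) (fun k hk => ?_) (fun k hk k' hk' hkk' => ?_)
    · obtain ⟨hkS, rfl⟩ := mem_filter.1 hk
      refine mem_filter.2 ⟨(hS k hkS).1, ?_⟩
      rw [sum_mul_update_zero]
      convert (hS k hkS).2 using 1
      ring
    · obtain ⟨-, hk⟩ := mem_filter.1 (mem_coe.1 hk)
      obtain ⟨-, hk'⟩ := mem_filter.1 (mem_coe.1 hk')
      exact eq_of_update_eq_of_apply_eq (hk.trans hk'.symm) hkk'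
  calc (#{k ∈ S | Function.update k i 0 = k₀} : ℤ) * (Q / Int.gcd Q (q i))
      ≤ (#{x ∈ Icc (-K) K | Q ∣ (∑ u, q u * k₀ u - c) + q i * x} : ℤ) *
          (Q / Int.gcd Q (q i)) :=
        mul_le_mul_of_nonneg_right (by exact_mod_cast hle)
          (Int.ediv_nonneg hQ.le (by positivity))
    _ ≤ 2 * K + Q / Int.gcd Q (q i) := card_filter_dvd_add_mul_mul_le hK hQ _ _

theorem mul_card_filter_dvd_sum_mul_sub_le {K Q : ℤ} (hK : 0 ≤ K) (hQ : 0 < Q) (q : ι → ℤ)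
    (c : ℤ) {s : Finset ι} (hgcd : gcd Q (s.gcd q) = 1) :
    Q * #{k ∈ boxOn s K | Q ∣ ∑ u, q u * k u - c} ≤ (2 * K + Q) ^ #s := by
  induction s using Finset.induction_on generalizing Q with
  | empty =>
    rw [Finset.gcd_empty, gcd_zero_right, Int.normalize_of_nonneg hQ.le] at hgcd
    subst hgcd
    have hbox : #(boxOn (∅ : Finset ι) K) = 1 := by simp [boxOn]
    simp [hbox]
  | @insert i s₀ hi ih =>
    -- split `Q = g * t` with `g = gcd Q (q i)`: the coordinate `i` sees modulus `t`,
    -- the remaining coordinates the coprime modulus `g`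
    set g : ℤ := (Int.gcd Q (q i) : ℤ)
    set t : ℤ := Q / g
    have hg : 0 < g := by positivity [Int.gcd_pos_of_ne_zero_left (q i) hQ.ne']
    have hgt : g * t = Q := Int.mul_ediv_cancel' (Int.gcd_dvd_left ..)
    have ht : 0 < t := pos_of_mul_pos_right (hgt ▸ hQ) hg.le
    have hgQ : g ≤ Q := by nlinarith
    have htQ : t ≤ Q := by nlinarith
    have hgcd₀ : gcd g (s₀.gcd q) = 1 := by
      rwa [Finset.gcd_insert, ← gcd_assoc, ← Int.coe_gcd] at hgcd
    set S := {k ∈ boxOn (insert i s₀) K | Q ∣ ∑ u, q u * k u - c}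
    set S₀ := {k ∈ boxOn s₀ K | g ∣ ∑ u, q u * k u - c}
    have hmaps : ∀ k ∈ S, Function.update k i 0 ∈ S₀ := by
      intro k hk
      obtain ⟨hkbox, hkdvd⟩ := mem_filter.1 hk
      refine mem_filter.2 ⟨update_mem_boxOn_of_mem_boxOn_insert hi hkbox, ?_⟩
      rw [sum_mul_update_zero, sub_right_comm]
      exact dvd_sub ((Int.gcd_dvd_left ..).trans hkdvd)
        ((Int.gcd_dvd_right ..).mul_right _)
    have hS : ∀ k ∈ S, k i ∈ Icc (-K) K ∧ Q ∣ ∑ u, q u * k u - c := by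
      intro k hk
      obtain ⟨hkbox, hkdvd⟩ := mem_filter.1 hk
      simp only [boxOn, Fintype.mem_piFinset] at hkbox
      simpa using And.intro (hkbox i) hkdvd
    have hfib : (#S : ℤ) * t ≤ #S₀ * (2 * K + t) := by
      rw [card_eq_sum_card_fiberwise hmaps, Nat.cast_sum, sum_mul, ← nsmul_eq_mul, ← sum_const]
      exact sum_le_sum fun k₀ _ => card_filter_update_eq_mul_le hK hQ hS k₀
    calc Q * #S = g * (#S * t) := by rw [← hgt]; ring
      _ ≤ g * #S₀ * (2 * K + t) := by rw [mul_assoc]; exact mul_le_mul_of_nonneg_left hfib hg.le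
      _ ≤ (2 * K + g) ^ #s₀ * (2 * K + t) :=
          mul_le_mul_of_nonneg_right (ih hg hgcd₀) (by omega)
      _ ≤ (2 * K + Q) ^ #s₀ * (2 * K + Q) := by gcongr
      _ = (2 * K + Q) ^ #(insert i s₀) := by rw [card_insert_of_notMem hi, pow_succ]

def box (K : ℤ) : Finset (ι → ℤ) := boxOn univ K

lemma mem_box {K : ℤ} {k : ι → ℤ} : k ∈ box K ↔ ∀ i, |k i| ≤ K := by
  simp [box, boxOn, Fintype.mem_piFinset, abs_le]

lemma card_box {K : ℤ} (hK : 0 ≤ K) :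
    (#(box K : Finset (ι → ℤ)) : ℝ) = (2 * K + 1) ^ Fintype.card ι := by
  rw [box, boxOn, Fintype.card_piFinset]
  simp only [mem_univ, if_true, prod_const, card_univ, Int.card_Icc, Nat.cast_pow]
  rw [show K + 1 - -K = 2 * K + 1 by ring, ← Int.cast_natCast, Int.toNat_of_nonneg (by omega)]
  push_cast
  ring

theorem abs_mul_card_filter_sum_mul_eq_le {K : ℤ} (hK : 0 ≤ K) {q : ι → ℤ}
    (hq : univ.gcd q = 1) {i₀ : ι} (hi₀ : q i₀ ≠ 0) (c : ℤ) :
    |q i₀| * #{k ∈ box K | ∑ u, q u * k u = c} ≤ (2 * K + |q i₀|) ^ (Fintype.card ι - 1) := by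
  have hle : #{k ∈ box K | ∑ u, q u * k u = c} ≤
      #{k ∈ boxOn (univ.erase i₀) K | |q i₀| ∣ ∑ u, q u * k u - c} := by
    refine card_le_card_of_injOn (fun k => Function.update k i₀ 0) (fun k hk => ?_)
      (fun k hk k' hk' hkk' => ?_)
    · obtain ⟨hkbox, rfl⟩ := mem_filter.1 hk
      refine mem_filter.2 ⟨update_mem_boxOn_of_mem_boxOn_insert (notMem_erase i₀ univ) ?_, ?_⟩
      · rwa [insert_erase (mem_univ i₀)]
      · rw [sum_mul_update_zero, sub_sub_cancel_left, dvd_neg, abs_dvd]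
        exact dvd_mul_right _ _
    · obtain ⟨-, hk⟩ := mem_filter.1 (mem_coe.1 hk)
      obtain ⟨-, hk'⟩ := mem_filter.1 (mem_coe.1 hk')
      have hsum := congrArg (fun k => ∑ u, q u * k u) hkk'
      simp only [sum_mul_update_zero, hk, hk', sub_right_inj] at hsum
      exact eq_of_update_eq_of_apply_eq hkk' (mul_left_cancel₀ hi₀ hsum)
  have hgcd : gcd |q i₀| ((univ.erase i₀).gcd q) = 1 := by
    rwa [(Associated.refl _).abs_left.gcd_eq_left, ← Finset.gcd_insert,
      insert_erase (mem_univ i₀)]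
  calc |q i₀| * #{k ∈ box K | ∑ u, q u * k u = c}
      ≤ |q i₀| * #{k ∈ boxOn (univ.erase i₀) K | |q i₀| ∣ ∑ u, q u * k u - c} := by
        gcongr
    _ ≤ (2 * K + |q i₀|) ^ #(univ.erase i₀) :=
        mul_card_filter_dvd_sum_mul_sub_le hK (abs_pos.2 hi₀) q c hgcd
    _ = (2 * K + |q i₀|) ^ (Fintype.card ι - 1) := by
        rw [card_erase_of_mem (mem_univ i₀), card_univ]

end Counting

section Lattice

variable {d : ℕ}

lemma znorm_zero : znorm (0 : Fin d → ℤ) = 0 := by simp [znorm]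

lemma ne_zero_of_one_le_znorm {n : Fin d → ℤ} (hn : 1 ≤ znorm n) : n ≠ 0 := by
  rintro rfl
  rw [znorm_zero] at hn
  norm_num at hn

lemma abs_le_znorm (k : Fin d → ℤ) (i : Fin d) : |(k i : ℝ)| ≤ znorm k := by
  rw [znorm, ← Real.sqrt_sq_eq_abs]
  exact Real.sqrt_le_sqrt (single_le_sum (fun i _ => sq_nonneg ((k i : ℝ))) (mem_univ i))

lemma one_le_znorm {n : Fin d → ℤ} (hn : n ≠ 0) : 1 ≤ znorm n := by
  obtain ⟨i, hi⟩ := Function.ne_iff.1 hn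
  calc (1 : ℝ) ≤ |(n i : ℝ)| := by exact_mod_cast Int.one_le_abs hi
    _ ≤ znorm n := abs_le_znorm n i

lemma znorm_le_sqrt_mul {k : Fin d → ℤ} {t : ℝ} (ht : 0 ≤ t) (hk : ∀ i, |(k i : ℝ)| ≤ t) :
    znorm k ≤ √d * t := by
  have hsum : ∑ i, ((k i : ℝ)) ^ 2 ≤ d * t ^ 2 := by
    simpa using sum_le_sum fun i (_ : i ∈ univ) =>
      sq_le_sq' (abs_le.1 (hk i)).1 (abs_le.1 (hk i)).2
  calc znorm k ≤ √(d * t ^ 2) := Real.sqrt_le_sqrt hsum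
    _ = √d * t := by rw [Real.sqrt_mul (Nat.cast_nonneg d), Real.sqrt_sq ht]

lemma exists_ne_zero_and_znorm_le_sqrt_mul_abs {k : Fin d → ℤ} (hk : k ≠ 0) :
    ∃ i, k i ≠ 0 ∧ znorm k ≤ √d * |(k i : ℝ)| := by
  obtain ⟨i₀, -, hmax⟩ := exists_max_image univ (fun i => |k i|)
    (univ_nonempty_iff.2 ⟨(Function.ne_iff.1 hk).choose⟩)
  refine ⟨i₀, fun h => hk (funext fun i => by simpa [h] using hmax i (mem_univ i)), ?_⟩
  exact znorm_le_sqrt_mul (abs_nonneg _) fun i => by exact_mod_cast hmax i (mem_univ i)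

lemma znorm_eq_norm (k : Fin d → ℤ) :
    znorm k = ‖(WithLp.toLp 2 (fun i => (k i : ℝ)) : EuclideanSpace ℝ (Fin d))‖ := by
  simp [znorm, EuclideanSpace.norm_eq]

lemma znorm_sub_le (l k : Fin d → ℤ) : znorm (l - k) ≤ znorm l + znorm k := by
  have hsub : (WithLp.toLp 2 (fun i => ((l - k) i : ℝ)) : EuclideanSpace ℝ (Fin d)) =
      WithLp.toLp 2 (fun i => (l i : ℝ)) - WithLp.toLp 2 (fun i => (k i : ℝ)) := by
    ext i
    simp
  rw [znorm_eq_norm, znorm_eq_norm, znorm_eq_norm, hsub]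
  exact norm_sub_le _ _

lemma znorm_add_eq_znorm_iff (k n : Fin d → ℤ) :
    znorm (k + n) = znorm k ↔ 2 * ∑ i, n i * k i + ∑ i, n i ^ 2 = 0 := by
  rw [znorm, znorm, Real.sqrt_inj (by positivity) (by positivity)]
  have hexp : ∑ i, (((k + n) i : ℤ) : ℝ) ^ 2 =
      ∑ i, ((k i : ℤ) : ℝ) ^ 2 + ((2 * ∑ i, n i * k i + ∑ i, n i ^ 2 : ℤ) : ℝ) := by
    simp only [Pi.add_apply]
    push_cast
    rw [mul_sum, ← sum_add_distrib, ← sum_add_distrib]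
    exact sum_congr rfl fun i _ => by ring
  rw [hexp, add_eq_left]
  exact_mod_cast Iff.rfl

def ball (d : ℕ) (t : ℝ) : Finset (Fin d → ℤ) := {k ∈ box ⌊t⌋ | znorm k ≤ t}

lemma mem_ball {t : ℝ} {k : Fin d → ℤ} : k ∈ ball d t ↔ znorm k ≤ t := by
  refine ⟨fun h => (mem_filter.1 h).2, fun h => mem_filter.2 ⟨mem_box.2 fun i => ?_, h⟩⟩
  exact Int.le_floor.2 (by simpa using (abs_le_znorm k i).trans h)

lemma ball_subset_box (t : ℝ) : ball d t ⊆ box ⌊t⌋ := filter_subset _ _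

lemma latticeCount_eq_card_ball (t : ℝ) : latticeCount d t = #(ball d t) := by
  rw [latticeCount, ← Set.ncard_coe_finset]
  congr
  ext k
  simp [mem_ball]

lemma pow_le_sqrt_pow_mul_latticeCount (hd : 0 < d) {lam : ℝ} (hlam : 0 ≤ lam) :
    lam ^ d ≤ √d ^ d * latticeCount d lam := by
  have hsd : 0 < √(d : ℝ) := Real.sqrt_pos.2 (by exact_mod_cast hd)
  -- the cube of side `2K + 1`, `K = ⌊lam / √d⌋`, fits in the ball of radius `lam`
  set K := ⌊lam / √d⌋
  have hK : 0 ≤ K := Int.floor_nonneg.2 (by positivity)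
  have hsub : box K ⊆ ball d lam := fun k hk => mem_ball.2 <| by
    refine (znorm_le_sqrt_mul (t := K) (by exact_mod_cast hK) fun i => ?_).trans ?_
    · exact_mod_cast mem_box.1 hk i
    · exact (le_div_iff₀' hsd).1 (Int.floor_le _)
  have hside : lam ≤ √d * (2 * K + 1) := by
    rw [← div_le_iff₀' hsd]
    have : (0 : ℝ) ≤ K := by exact_mod_cast hK
    linarith [Int.lt_floor_add_one (lam / √d)]
  calc lam ^ d ≤ (√d * (2 * K + 1)) ^ d := pow_le_pow_left₀ hlam hside d
    _ = √d ^ d * #(box K : Finset (Fin d → ℤ)) := by rw [mul_pow, card_box hK, Fintype.card_fin]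
    _ ≤ √d ^ d * latticeCount d lam := by
      rw [latticeCount_eq_card_ball]
      gcongr

end Lattice

section PrimitivePart

variable {d : ℕ} {n : Fin d → ℤ}

lemma gcd_pos_of_ne_zero (hn : n ≠ 0) : 0 < univ.gcd n := by
  have hne : univ.gcd n ≠ 0 := fun h =>
    hn (funext fun i => Finset.gcd_eq_zero_iff.1 h i (mem_univ i))
  have hnn : 0 ≤ univ.gcd n := by
    rw [← Finset.normalize_gcd, ← Int.abs_eq_normalize]
    exact abs_nonneg _
  omega

lemma gcd_mul_primPart (i : Fin d) : univ.gcd n * primPart n i = n i :=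
  Int.mul_ediv_cancel' (Finset.gcd_dvd (mem_univ i))

lemma gcd_primPart (hn : n ≠ 0) : univ.gcd (primPart n) = 1 := by
  obtain ⟨i, hi⟩ := Function.ne_iff.1 hn
  exact Finset.gcd_div_eq_one (mem_univ i) hi

lemma primPart_ne_zero (hn : n ≠ 0) : primPart n ≠ 0 := fun h =>
  one_ne_zero ((gcd_primPart hn).symm.trans (Finset.gcd_eq_zero_iff.2 fun i _ => congrFun h i))

lemma abs_primPart_le (i : Fin d) (hn : n ≠ 0) : |primPart n i| ≤ |n i| := by
  rw [← gcd_mul_primPart (n := n) i, abs_mul, abs_of_pos (gcd_pos_of_ne_zero hn)]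
  exact le_mul_of_one_le_left (abs_nonneg _) (gcd_pos_of_ne_zero hn)

end PrimitivePart

section SphereShift

variable {d : ℕ}

theorem abs_primPart_mul_card_filter_znorm_add_eq_le {K : ℤ} (hK : 0 ≤ K) {n : Fin d → ℤ}
    (hn : n ≠ 0) {i₀ : Fin d} (hi₀ : primPart n i₀ ≠ 0) :
    |primPart n i₀| * #{k ∈ box K | znorm (k + n) = znorm k} ≤
      (2 * K + |primPart n i₀|) ^ (d - 1) := by
  set S : Finset (Fin d → ℤ) := {k ∈ box K | znorm (k + n) = znorm k}
  obtain hS | ⟨k₀, hk₀⟩ := S.eq_empty_or_nonempty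
  · rw [hS, card_empty, Nat.cast_zero, mul_zero]
    positivity
  -- `‖k + n‖ = ‖k‖` pins `⟨n, k⟩`, hence `⟨primPart n, k⟩`, to a single value
  have hsum (k : Fin d → ℤ) : ∑ i, n i * k i = univ.gcd n * ∑ i, primPart n i * k i := by
    rw [mul_sum]
    exact sum_congr rfl fun i _ => by rw [← mul_assoc, gcd_mul_primPart]
  have hsub : S ⊆ {k ∈ (box K : Finset (Fin d → ℤ)) |
      ∑ i, primPart n i * k i = ∑ i, primPart n i * k₀ i} := by
    intro k hk
    obtain ⟨hkbox, hk⟩ := mem_filter.1 hk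
    have hk₀' := (znorm_add_eq_znorm_iff k₀ n).1 (mem_filter.1 hk₀).2
    have hk' := (znorm_add_eq_znorm_iff k n).1 hk
    refine mem_filter.2 ⟨hkbox, mul_left_cancel₀ (gcd_pos_of_ne_zero hn).ne' ?_⟩
    rw [← hsum, ← hsum]
    omega
  calc |primPart n i₀| * #S
      ≤ |primPart n i₀| *
          #{k ∈ box K | ∑ i, primPart n i * k i = ∑ i, primPart n i * k₀ i} := by gcongr
    _ ≤ (2 * K + |primPart n i₀|) ^ (d - 1) := by
        simpa using abs_mul_card_filter_sum_mul_eq_le hK (gcd_primPart hn) hi₀ _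

lemma card_filter_znorm_add_eq_mul_le {lam : ℝ} {n : Fin d → ℤ} (hn1 : 1 ≤ znorm n)
    (hn2 : znorm n ≤ 2 * lam) :
    #{k ∈ ball d lam | znorm (k + n) = znorm k} * (lam * znorm (primPart n)) ≤
      4 ^ (d - 1) * √d ^ (d + 1) * latticeCount d lam := by
  have hn := ne_zero_of_one_le_znorm hn1
  have hlam : 0 < lam := by linarith
  obtain ⟨i₀, hi₀, hq⟩ := exists_ne_zero_and_znorm_le_sqrt_mul_abs (primPart_ne_zero hn)
  have hd : 0 < d := Fin.pos_iff_nonempty.2 ⟨i₀⟩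
  have hQ : |(primPart n i₀ : ℝ)| ≤ 2 * lam := calc
    |(primPart n i₀ : ℝ)| ≤ |(n i₀ : ℝ)| := by exact_mod_cast abs_primPart_le i₀ hn
    _ ≤ 2 * lam := (abs_le_znorm n i₀).trans hn2
  have hK : 0 ≤ ⌊lam⌋ := Int.floor_nonneg.2 hlam.le
  have hM : |(primPart n i₀ : ℝ)| * #{k ∈ ball d lam | znorm (k + n) = znorm k} ≤
      (4 * lam) ^ (d - 1) := calc
    _ ≤ |(primPart n i₀ : ℝ)| * #{k ∈ box ⌊lam⌋ | znorm (k + n) = znorm k} := by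
      gcongr
      exact ball_subset_box lam
    _ ≤ (2 * ⌊lam⌋ + |(primPart n i₀ : ℝ)|) ^ (d - 1) := by
      exact_mod_cast abs_primPart_mul_card_filter_znorm_add_eq_le hK hn hi₀
    _ ≤ (4 * lam) ^ (d - 1) := by
      have : (0 : ℝ) ≤ ⌊lam⌋ := by exact_mod_cast hK
      gcongr
      linarith [Int.floor_le lam]
  calc (#{k ∈ ball d lam | znorm (k + n) = znorm k} : ℝ) * (lam * znorm (primPart n))
      ≤ #{k ∈ ball d lam | znorm (k + n) = znorm k} * (lam * (√d * |(primPart n i₀ : ℝ)|)) :=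
        by gcongr
    _ = √d * lam * (|(primPart n i₀ : ℝ)| * #{k ∈ ball d lam | znorm (k + n) = znorm k}) := by
        ring
    _ ≤ √d * lam * (4 * lam) ^ (d - 1) := by gcongr
    _ = √d * 4 ^ (d - 1) * lam ^ d := by
      rw [mul_pow, ← mul_assoc, mul_right_comm _ lam, mul_assoc _ lam, ← pow_succ',
        Nat.sub_add_cancel hd]
    _ ≤ √d * 4 ^ (d - 1) * (√d ^ d * latticeCount d lam) := by
      gcongr
      exact pow_le_sqrt_pow_mul_latticeCount hd hlam.le
    _ = 4 ^ (d - 1) * √d ^ (d + 1) * latticeCount d lam := by ring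

end SphereShift

section Bessel

open scoped InnerProductSpace

variable {α ι : Type*} [DecidableEq ι]

theorem sum_norm_sq_sum_conj_mul_sum_le (S : Finset α) (J : Finset ι) (c : ι → α → ℂ)
    (hc : ∀ i ∈ J, ∀ j ∈ J, ∑ k ∈ S, c i k * conj (c j k) = if i = j then 1 else 0)
    (T : α → α → ℂ) :
    ∑ j ∈ J, ‖∑ l ∈ S, conj (c j l) * ∑ k ∈ S, T l k * c j k‖ ^ 2 ≤
      ∑ l ∈ S, ∑ k ∈ S, ‖T l k‖ ^ 2 := by
  let vec : (α → ℂ) → EuclideanSpace ℂ S := fun f => WithLp.toLp 2 fun k => f k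
  have inner_vec (f g : α → ℂ) : ⟪vec f, vec g⟫_ℂ = ∑ k ∈ S, conj (f k) * g k := by
    rw [PiLp.inner_apply, ← sum_coe_sort S]
    exact sum_congr rfl fun k _ => RCLike.inner_apply' _ _
  have norm_vec (f : α → ℂ) : ‖vec f‖ ^ 2 = ∑ k ∈ S, ‖f k‖ ^ 2 := by
    rw [EuclideanSpace.norm_eq, Real.sq_sqrt (by positivity), ← sum_coe_sort S]
  have horth : Orthonormal ℂ fun j : J => vec (c j) := by
    refine orthonormal_iff_ite.2 fun i j => ?_
    calc ⟪vec (c i), vec (c j)⟫_ℂ = conj (∑ k ∈ S, c i k * conj (c j k)) := by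
          rw [inner_vec, map_sum]
          exact sum_congr rfl fun k _ => by rw [map_mul, Complex.conj_conj, mul_comm]
      _ = if i = j then 1 else 0 := by
          rw [hc i i.2 j j.2, apply_ite conj, map_one, map_zero]
          exact if_congr Subtype.ext_iff.symm rfl rfl
  let row (l : α) : EuclideanSpace ℂ S := vec fun k => conj (T l k)
  calc ∑ j ∈ J, ‖∑ l ∈ S, conj (c j l) * ∑ k ∈ S, T l k * c j k‖ ^ 2
      ≤ ∑ j ∈ J, ∑ l ∈ S, ‖∑ k ∈ S, T l k * c j k‖ ^ 2 := by
        refine sum_le_sum fun j hj => ?_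
        rw [← inner_vec (c j) fun l => ∑ k ∈ S, T l k * c j k, ← norm_vec]
        calc _ ≤ (‖vec (c j)‖ * ‖vec fun l => ∑ k ∈ S, T l k * c j k‖) ^ 2 :=
              pow_le_pow_left₀ (norm_nonneg _) (norm_inner_le_norm _ _) 2
          _ = _ := by rw [horth.1 ⟨j, hj⟩, one_mul]
    _ = ∑ l ∈ S, ∑ j : J, ‖⟪vec (c j), row l⟫_ℂ‖ ^ 2 := by
        rw [sum_comm]
        refine sum_congr rfl fun l _ => ?_
        rw [sum_coe_sort J fun j => ‖⟪vec (c j), row l⟫_ℂ‖ ^ 2]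
        refine sum_congr rfl fun j _ => ?_
        simp only [row, inner_vec, ← map_mul, ← map_sum, RCLike.norm_conj, mul_comm]
    _ ≤ ∑ l ∈ S, ‖row l‖ ^ 2 :=
        sum_le_sum fun l _ => Orthonormal.sum_inner_products_le (row l) horth
    _ = ∑ l ∈ S, ∑ k ∈ S, ‖T l k‖ ^ 2 := by simp [row, norm_vec]

end Bessel

section MatrixElements

variable {d : ℕ}

lemma eChar_zero (x : Td d) : eChar 0 x = 1 := by simp [eChar]

lemma eChar_mul_conj (k l : Fin d → ℤ) (x : Td d) :
    eChar k x * conj (eChar l x) = conj (eChar (l - k) x) := by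
  simp only [eChar, map_prod, ← prod_mul_distrib]
  refine prod_congr rfl fun i _ => ?_
  rw [← fourier_neg, ← fourier_neg, ← fourier_add, Pi.sub_apply, neg_sub, sub_eq_add_neg]

lemma norm_eChar (k : Fin d → ℤ) (x : Td d) : ‖eChar k x‖ = 1 := by
  simp [eChar, fourier_apply, Circle.norm_coe]

lemma integrable_mul_conj_eChar {μ : Measure (Td d)} {a : Td d → ℂ} (ha : Integrable a μ)
    (n : Fin d → ℤ) : Integrable (fun x => a x * conj (eChar n x)) μ := by
  refine ha.mul_bdd (c := 1) ?_ (Filter.Eventually.of_forall fun x => by simp [norm_eChar])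
  exact (continuous_star.comp (continuous_finsetProd _ fun i _ =>
    (map_continuous (fourier (n i))).comp (continuous_apply i))).aestronglyMeasurable

def measureCoeff (μ : Measure (Td d)) (a : Td d → ℂ) (n : Fin d → ℤ) : ℂ :=
  ∫ x, a x * conj (eChar n x) ∂μ

lemma measureCoeff_zero (μ : Measure (Td d)) (a : Td d → ℂ) :
    measureCoeff μ a 0 = ∫ x, a x ∂μ := by
  simp [measureCoeff, eChar_zero]

/-- With `F = measureCoeff μ a`, `F (l - k) = ∫ a e_k conj e_l dμ` is the matrix of multiplication
by `a` in the basis `(e_k)`. Its diagonal gives `∫ a dμ` and eigenfunctions do not see entries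
between different spheres, so only the entries kept here enter the variance. -/
def sphereMatrix (F : (Fin d → ℤ) → ℂ) (l k : Fin d → ℤ) : ℂ :=
  if znorm l = znorm k ∧ k ≠ l then F (l - k) else 0

lemma sum_conj_mul_sum_sub_eq_sphereMatrix {S : Finset (Fin d → ℤ)} {c : (Fin d → ℤ) → ℂ}
    {r : ℝ} (hc : ∀ k, c k ≠ 0 → znorm k = r) (hnorm : ∑ k ∈ S, c k * conj (c k) = 1)
    (F : (Fin d → ℤ) → ℂ) :
    ∑ l ∈ S, conj (c l) * ∑ k ∈ S, F (l - k) * c k - F 0 =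
      ∑ l ∈ S, conj (c l) * ∑ k ∈ S, sphereMatrix F l k * c k := by
  have hterm : ∀ l k, conj (c l) * (F (l - k) * c k) =
      conj (c l) * (sphereMatrix F l k * c k) + if l = k then c l * conj (c l) * F 0 else 0 := by
    intro l k
    by_cases hkl : l = k
    · subst hkl; simp [sphereMatrix]; ring
    by_cases hr : znorm l = znorm k
    · simp [sphereMatrix, hr, hkl, Ne.symm hkl]
    -- off the sphere the product of coefficients vanishes
    have : conj (c l) * c k = 0 := by
      by_contra h
      obtain ⟨hl, hk⟩ := mul_ne_zero_iff.1 h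
      exact hr ((hc l (by simpa using hl)).trans (hc k hk).symm)
    simp only [sphereMatrix, hr, false_and, if_false, hkl, add_zero, zero_mul, mul_zero]
    linear_combination F (l - k) * this
  simp only [mul_sum, hterm, sum_add_distrib, sum_ite_eq, sum_ite_mem, inter_self,
    ← sum_mul, hnorm, one_mul, add_sub_cancel_right]

end MatrixElements

end QuantumVariance

namespace Eigenbasis

open QuantumVariance

variable {d : ℕ} (B : Eigenbasis d) {t : ℝ}

lemma c_eq_zero_of_notMem_ball {j : ℕ} (hj : B.Λ j ≤ t) {k : Fin d → ℤ} (hk : k ∉ ball d t) :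
    B.c j k = 0 := by
  by_contra h
  exact hk (mem_ball.2 ((B.supp j k h).trans_le hj))

lemma ψ_eq_sum {j : ℕ} (hj : B.Λ j ≤ t) (x : Td d) :
    B.ψ j x = ∑ k ∈ ball d t, B.c j k * eChar k x := by
  rw [B.repr j x]
  exact tsum_eq_sum fun k hk => by rw [B.c_eq_zero_of_notMem_ball hj hk, zero_mul]

lemma sum_c_mul_conj {i : ℕ} (hi : B.Λ i ≤ t) (j : ℕ) :
    ∑ k ∈ ball d t, B.c i k * conj (B.c j k) = if i = j then 1 else 0 := by
  rw [← B.ortho i j]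
  exact (tsum_eq_sum fun k hk => by rw [B.c_eq_zero_of_notMem_ball hi hk, zero_mul]).symm

lemma integral_mul_norm_sq (μ : Measure (Td d)) {a : Td d → ℂ} (ha : Integrable a μ) {j : ℕ}
    (hj : B.Λ j ≤ t) :
    ∫ x, a x * ((‖B.ψ j x‖ ^ 2 : ℝ) : ℂ) ∂μ =
      ∑ l ∈ ball d t, conj (B.c j l) * ∑ k ∈ ball d t, measureCoeff μ a (l - k) * B.c j k := by
  have hpt : ∀ x, a x * ((‖B.ψ j x‖ ^ 2 : ℝ) : ℂ) = ∑ l ∈ ball d t, ∑ k ∈ ball d t,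
      conj (B.c j l) * B.c j k * (a x * conj (eChar (l - k) x)) := fun x => by
    rw [Complex.ofReal_pow, ← Complex.mul_conj', B.ψ_eq_sum hj, map_sum, sum_mul_sum, sum_comm,
      mul_sum]
    refine sum_congr rfl fun l _ => ?_
    rw [mul_sum]
    refine sum_congr rfl fun k _ => ?_
    rw [← eChar_mul_conj, map_mul]
    ring
  have hint := integrable_mul_conj_eChar ha
  rw [integral_congr_ae (Filter.Eventually.of_forall hpt),
    integral_finsetSum _ fun l _ => integrable_finsetSum _ fun k _ => (hint _).const_mul _]
  refine sum_congr rfl fun l _ => ?_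
  rw [integral_finsetSum _ fun k _ => (hint _).const_mul _, mul_sum]
  refine sum_congr rfl fun k _ => ?_
  rw [integral_const_mul, measureCoeff]
  ring

lemma integral_mul_norm_sq_sub_eq_sum_sphereMatrix (μ : Measure (Td d)) {a : Td d → ℂ}
    (ha : Integrable a μ) {j : ℕ} (hj : B.Λ j ≤ t) :
    ∫ x, a x * ((‖B.ψ j x‖ ^ 2 : ℝ) : ℂ) ∂μ - ∫ x, a x ∂μ =
      ∑ l ∈ ball d t, conj (B.c j l) *
        ∑ k ∈ ball d t, sphereMatrix (measureCoeff μ a) l k * B.c j k := by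
  rw [B.integral_mul_norm_sq μ ha hj, ← measureCoeff_zero]
  exact sum_conj_mul_sum_sub_eq_sphereMatrix (B.supp j) (by simpa using B.sum_c_mul_conj hj j) _

end Eigenbasis

namespace QuantumVariance

section HilbertSchmidt

variable {d : ℕ}

def annulus (d : ℕ) (lam : ℝ) : Finset (Fin d → ℤ) := {n ∈ ball d (2 * lam) | 1 ≤ znorm n}

lemma mem_annulus {lam : ℝ} {n : Fin d → ℤ} :
    n ∈ annulus d lam ↔ 1 ≤ znorm n ∧ znorm n ≤ 2 * lam := by
  rw [annulus, mem_filter, mem_ball, and_comm]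

lemma sum_norm_sq_sphereMatrix_le (F : (Fin d → ℤ) → ℂ) (lam : ℝ) (k : Fin d → ℤ) :
    ∑ l ∈ ball d lam, ‖sphereMatrix F l k‖ ^ 2 ≤
      ∑ n ∈ annulus d lam, if znorm (k + n) = znorm k then ‖F n‖ ^ 2 else 0 := by
  let P : (Fin d → ℤ) → Prop := fun l => znorm l = znorm k ∧ k ≠ l
  have himage : {l ∈ ball d lam | P l}.image (· - k) ⊆
      {n ∈ annulus d lam | znorm (k + n) = znorm k} := by
    simp only [subset_iff, mem_image, mem_filter, mem_annulus, mem_ball]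
    rintro _ ⟨l, ⟨hl, hlk, hne⟩, rfl⟩
    refine ⟨⟨one_le_znorm (sub_ne_zero.2 (Ne.symm hne)), ?_⟩, by rwa [add_sub_cancel]⟩
    linarith [znorm_sub_le l k]
  calc ∑ l ∈ ball d lam, ‖sphereMatrix F l k‖ ^ 2
      = ∑ l ∈ ball d lam with P l, ‖F (l - k)‖ ^ 2 := by
        rw [sum_filter]
        exact sum_congr rfl fun l _ => by unfold sphereMatrix; split_ifs <;> simp
    _ = ∑ n ∈ {l ∈ ball d lam | P l}.image (· - k), ‖F n‖ ^ 2 :=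
        (sum_image (f := fun n => ‖F n‖ ^ 2) fun _ _ _ _ h => sub_left_injective h).symm
    _ ≤ ∑ n ∈ annulus d lam with znorm (k + n) = znorm k, ‖F n‖ ^ 2 :=
        sum_le_sum_of_subset_of_nonneg himage fun _ _ _ => sq_nonneg _
    _ = _ := sum_filter _ _

theorem sum_sum_norm_sq_sphereMatrix_le (F : (Fin d → ℤ) → ℂ) (lam : ℝ) :
    ∑ l ∈ ball d lam, ∑ k ∈ ball d lam, ‖sphereMatrix F l k‖ ^ 2 ≤
      ∑ n ∈ annulus d lam, #{k ∈ ball d lam | znorm (k + n) = znorm k} * ‖F n‖ ^ 2 := by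
  rw [sum_comm]
  calc ∑ k ∈ ball d lam, ∑ l ∈ ball d lam, ‖sphereMatrix F l k‖ ^ 2
      ≤ ∑ k ∈ ball d lam, ∑ n ∈ annulus d lam,
          if znorm (k + n) = znorm k then ‖F n‖ ^ 2 else 0 :=
        sum_le_sum fun k _ => sum_norm_sq_sphereMatrix_le F lam k
    _ = _ := by
        rw [sum_comm]
        simp only [← sum_filter, sum_const, nsmul_eq_mul]

end HilbertSchmidt

theorem tsum_norm_sq_integral_mul_norm_sq_sub_le (B : Eigenbasis d) (μ : Measure (Td d))
    {a : Td d → ℂ} (ha : Integrable a μ) (lam : ℝ) :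
    ∑' j : ℕ, (if B.Λ j ≤ lam then
        ‖∫ x, a x * ((‖B.ψ j x‖ ^ 2 : ℝ) : ℂ) ∂μ - ∫ x, a x ∂μ‖ ^ 2 else 0) ≤
      ∑ n ∈ annulus d lam,
        #{k ∈ ball d lam | znorm (k + n) = znorm k} * ‖measureCoeff μ a n‖ ^ 2 := by
  refine Real.tsum_le_of_sum_le (fun j => by dsimp only; split_ifs <;> positivity) fun J => ?_
  rw [← sum_filter]
  calc _ = ∑ j ∈ J with B.Λ j ≤ lam, ‖∑ l ∈ ball d lam, conj (B.c j l) *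
          ∑ k ∈ ball d lam, sphereMatrix (measureCoeff μ a) l k * B.c j k‖ ^ 2 :=
        sum_congr rfl fun j hj => by
          rw [B.integral_mul_norm_sq_sub_eq_sum_sphereMatrix μ ha (mem_filter.1 hj).2]
    _ ≤ ∑ l ∈ ball d lam, ∑ k ∈ ball d lam, ‖sphereMatrix (measureCoeff μ a) l k‖ ^ 2 :=
        sum_norm_sq_sum_conj_mul_sum_le _ _ B.c
          (fun i hi j _ => B.sum_c_mul_conj (mem_filter.1 hi).2 j) _
    _ ≤ _ := sum_sum_norm_sq_sphereMatrix_le _ lam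

lemma tsum_ite_eq_sum_annulus (f : (Fin d → ℤ) → ℝ) (lam : ℝ) :
    ∑' n : Fin d → ℤ, (if 1 ≤ znorm n ∧ znorm n ≤ 2 * lam then f n else 0) =
      ∑ n ∈ annulus d lam, f n := by
  rw [tsum_eq_sum (s := annulus d lam) fun n hn => if_neg (mt mem_annulus.2 hn)]
  exact sum_congr rfl fun n hn => if_pos (mem_annulus.1 hn)

theorem quantum_variance_le (B : Eigenbasis d) (μ : Measure (Td d)) {a : Td d → ℂ}
    (ha : Integrable a μ) {lam : ℝ} (hlam : 0 < lam) :
    1 / (latticeCount d lam : ℝ) *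
        (∑' j : ℕ, if B.Λ j ≤ lam then
          ‖∫ x, a x * ((‖B.ψ j x‖ ^ 2 : ℝ) : ℂ) ∂μ - ∫ x, a x ∂μ‖ ^ 2 else 0) ≤
      4 ^ (d - 1) * √d ^ (d + 1) / lam * ∑' n : Fin d → ℤ,
        if 1 ≤ znorm n ∧ znorm n ≤ 2 * lam then
          ‖measureCoeff μ a n‖ ^ 2 / znorm (primPart n) else 0 := by
  have hN : 0 < (latticeCount d lam : ℝ) := by
    rw [Nat.cast_pos, latticeCount_eq_card_ball, card_pos]
    exact ⟨0, mem_ball.2 (by rw [znorm_zero]; exact hlam.le)⟩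
  have hcount : ∀ n ∈ annulus d lam, (#{k ∈ ball d lam | znorm (k + n) = znorm k} : ℝ) ≤
      4 ^ (d - 1) * √d ^ (d + 1) * latticeCount d lam / (lam * znorm (primPart n)) := by
    intro n hn
    obtain ⟨hn1, hn2⟩ := mem_annulus.1 hn
    have hq := one_le_znorm (primPart_ne_zero (ne_zero_of_one_le_znorm hn1))
    rw [le_div_iff₀ (by positivity)]
    exact card_filter_znorm_add_eq_mul_le hn1 hn2
  calc _ ≤ 1 / (latticeCount d lam : ℝ) * ∑ n ∈ annulus d lam,
          #{k ∈ ball d lam | znorm (k + n) = znorm k} * ‖measureCoeff μ a n‖ ^ 2 := by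
        gcongr
        exact tsum_norm_sq_integral_mul_norm_sq_sub_le B μ ha lam
    _ ≤ 1 / (latticeCount d lam : ℝ) * ∑ n ∈ annulus d lam,
          4 ^ (d - 1) * √d ^ (d + 1) * latticeCount d lam / (lam * znorm (primPart n)) *
            ‖measureCoeff μ a n‖ ^ 2 := by
        gcongr with n hn
        exact hcount n hn
    _ = _ := by
        rw [tsum_ite_eq_sum_annulus, mul_sum, mul_sum]
        refine sum_congr rfl fun n _ => ?_
        field_simp

end QuantumVariance

/-- quantum variance for matrix elements against an arbitrary probability
measure on the torus. -/
theorem statement12 (d : ℕ) (hd : 2 ≤ d) :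
    ∃ C : ℝ, 0 < C ∧ ∀ μ : Measure (Td d), IsProbabilityMeasure μ →
      ∀ a : Td d → ℂ, Continuous a →
      ∀ B : Eigenbasis d, ∀ lam : ℝ, 0 < lam →
        (1 / (latticeCount d lam : ℝ)) *
            (∑' j : ℕ, if B.Λ j ≤ lam then
              ‖(∫ x, a x * ((‖B.ψ j x‖ ^ 2 : ℝ) : ℂ) ∂μ) - ∫ x, a x ∂μ‖ ^ 2 else 0)
          ≤ (C / lam) * ∑' n : Fin d → ℤ,
              if 1 ≤ znorm n ∧ znorm n ≤ 2 * lam then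
                ‖∫ x, a x * conj (eChar n x) ∂μ‖ ^ 2 / znorm (primPart n) else 0 :=
  ⟨4 ^ (d - 1) * √d ^ (d + 1), by positivity, fun μ _ a ha B _ hlam =>
    QuantumVariance.quantum_variance_le B μ
      (ha.integrable_of_hasCompactSupport (HasCompactSupport.of_compactSpace a)) hlam⟩
end
end

section
/- For every δ ∈ (0,1) there exists a constant C > 0 such that for every positive integer N, the number of integers E with 1 ≤ E ≤ N for which there exist k, l ∈ ℤ² with k ≠ l, ‖k‖² = ‖l‖² = E, and ‖k − l‖ ≤ E^{(1−δ)/2} is at most C · N^{1−δ/3}. -/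
open MeasureTheory Real BigOperators ComplexConjugate

noncomputable section

/-! If `k ≠ l` lie on the circle `‖·‖² = E`, then `d = k - l` and `s = k + l` are orthogonal.
Writing `d = G p` with `p` primitive forces `s = t p⊥` for an integer `t`, so
`4E = (G² + t²) ‖p‖²` with `G² ‖p‖² = ‖d‖² ≤ N^(1-δ)` and `t² ‖p‖² = ‖s‖² ≤ 4N`.
Thus `E` is determined by `(p, G, t)`, and for fixed `p` there are `≲ N^(1-δ/2) / ‖p‖²` choices
of `(G, t)`. Bounding `‖p‖⁻²` by `max(1,|p₀|)⁻¹ max(1,|p₁|)⁻¹`, the sum over `p` is a squared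
harmonic sum, `≲ log² N ≪ N^(δ/6)`. -/

open Finset

lemma znorm_sq_fin_two (k : Fin 2 → ℤ) : znorm k ^ 2 = ((k 0 ^ 2 + k 1 ^ 2 : ℤ) : ℝ) := by
  rw [znorm, Real.sq_sqrt (by positivity), Fin.sum_univ_two]
  push_cast
  rfl

lemma IsCoprime.exists_eq_of_mul_add_mul_eq_zero {R : Type*} [CommRing R] {p₀ p₁ m₀ m₁ : R}
    (hc : IsCoprime p₀ p₁) (h : p₀ * m₀ + p₁ * m₁ = 0) : ∃ t, m₀ = -t * p₁ ∧ m₁ = t * p₀ := by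
  obtain ⟨x, y, hxy⟩ := hc
  exact ⟨x * m₁ - y * m₀, by linear_combination (-m₀) * hxy + x * h,
    by linear_combination (-m₁) * hxy + y * h⟩

/-- With `p` primitive (the chord `k - l` divided by its content `G`), the vector `k + l`,
orthogonal to `p`, must be an integer multiple of `p` turned by a right angle. -/
lemma exists_chord_decomposition {k₀ k₁ l₀ l₁ : ℤ} (hne : k₀ ≠ l₀ ∨ k₁ ≠ l₁)
    (h : k₀ ^ 2 + k₁ ^ 2 = l₀ ^ 2 + l₁ ^ 2) :
    ∃ (G : ℕ) (p₀ p₁ t : ℤ), 0 < G ∧ k₀ - l₀ = G * p₀ ∧ k₁ - l₁ = G * p₁ ∧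
      k₀ + l₀ = -t * p₁ ∧ k₁ + l₁ = t * p₀ := by
  set G := Int.gcd (k₀ - l₀) (k₁ - l₁)
  have hG : 0 < G := Int.gcd_pos_iff.mpr (by omega)
  have hd₀ : k₀ - l₀ = G * ((k₀ - l₀) / G) := (Int.mul_ediv_cancel' (Int.gcd_dvd_left _ _)).symm
  have hd₁ : k₁ - l₁ = G * ((k₁ - l₁) / G) := (Int.mul_ediv_cancel' (Int.gcd_dvd_right _ _)).symm
  have hcop : IsCoprime ((k₀ - l₀) / G) ((k₁ - l₁) / G) :=
    Int.isCoprime_iff_gcd_eq_one.mpr (Int.gcd_div_gcd_div_gcd hG)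
  have horth : (k₀ - l₀) / G * (k₀ + l₀) + (k₁ - l₁) / G * (k₁ + l₁) = 0 := by
    have : (G : ℤ) * ((k₀ - l₀) / G * (k₀ + l₀) + (k₁ - l₁) / G * (k₁ + l₁)) = 0 := by
      linear_combination h - (k₀ + l₀) * hd₀ - (k₁ + l₁) * hd₁
    exact (mul_eq_zero.mp this).resolve_left (by omega)
  obtain ⟨t, hs₀, hs₁⟩ := hcop.exists_eq_of_mul_add_mul_eq_zero horth
  exact ⟨G, _, _, t, hG, hd₀, hd₁, hs₀, hs₁⟩

lemma max_one_abs_mul_max_one_abs_le {u v : ℤ} (h : u ≠ 0 ∨ v ≠ 0) :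
    max 1 |u| * max 1 |v| ≤ u ^ 2 + v ^ 2 := by
  have habs (w : ℤ) (hw : w ≠ 0) : max 1 |w| = |w| := max_eq_right (Int.one_le_abs hw)
  rcases eq_or_ne u 0 with rfl | hu
  · have hv : v ≠ 0 := by simpa using h
    rw [abs_zero, max_eq_left zero_le_one, habs v hv]
    nlinarith [sq_abs v, Int.one_le_abs hv]
  rcases eq_or_ne v 0 with rfl | hv
  · rw [abs_zero, max_eq_left zero_le_one, habs u hu]
    nlinarith [sq_abs u, Int.one_le_abs hu]
  rw [habs u hu, habs v hv]
  nlinarith [sq_abs u, sq_abs v, sq_nonneg (|u| - |v|)]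

lemma sum_Icc_inv_max_one_abs (n : ℕ) :
    ∑ a ∈ Icc (-(n : ℤ)) n, (max 1 |(a : ℝ)|)⁻¹ = 1 + 2 * harmonic n := by
  induction n with
  | zero => simp
  | succ n ih =>
    have hIcc : Icc (-((n + 1 : ℕ) : ℤ)) (n + 1 : ℕ) =
        insert (-((n : ℤ) + 1)) (insert ((n : ℤ) + 1) (Icc (-(n : ℤ)) n)) := by
      ext a
      simp only [mem_Icc, mem_insert]
      omega
    rw [hIcc, sum_insert (by simp; omega), sum_insert (by simp), ih, harmonic_succ]
    push_cast
    rw [abs_neg, abs_of_nonneg (by positivity), max_eq_right (by simp)]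
    ring

def intBall (r : ℝ) : Finset ℤ := Icc (-⌊r⌋) ⌊r⌋

lemma mem_intBall {r : ℝ} {z : ℤ} : z ∈ intBall r ↔ |(z : ℝ)| ≤ r := by
  rw [intBall, mem_Icc, neg_le, Int.le_floor, Int.le_floor, abs_le, Int.cast_neg]
  constructor <;> rintro ⟨h₁, h₂⟩ <;> constructor <;> linarith

lemma mem_intBall_sqrt_of_sq_le {R : ℝ} {z : ℤ} (h : (z : ℝ) ^ 2 ≤ R) : z ∈ intBall √R :=
  mem_intBall.mpr (Real.abs_le_sqrt h)

lemma intBall_subset_Icc {r : ℝ} {n : ℕ} (h : r ≤ n) : intBall r ⊆ Icc (-(n : ℤ)) n := by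
  intro z hz
  obtain ⟨h₁, h₂⟩ := abs_le.mp ((mem_intBall.mp hz).trans h)
  exact mem_Icc.mpr ⟨by exact_mod_cast h₁, by exact_mod_cast h₂⟩

lemma card_intBall_le {r : ℝ} (hr : 0 ≤ r) : ((intBall r).card : ℝ) ≤ 2 * r + 1 := by
  have hfl : 0 ≤ ⌊r⌋ := Int.floor_nonneg.mpr hr
  rw [intBall, Int.card_Icc, show ⌊r⌋ + 1 - -⌊r⌋ = 2 * ⌊r⌋ + 1 by ring,
    ← Int.cast_natCast, Int.toNat_of_nonneg (by omega)]
  push_cast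
  linarith [Int.floor_le r]

/-- Parameters `(p, (G, t))` of chords `k - l = G • p`, `k + l = t • p⊥` as in
`exists_chord_decomposition`, with `‖k - l‖² ≤ X` and `‖k + l‖² ≤ Y`. -/
def chordParams (X Y : ℝ) : Finset (Σ _ : ℤ × ℤ, ℕ × ℤ) :=
  (intBall √X ×ˢ intBall √X).sigma fun p =>
    Icc 1 ⌊√(X / (p.1 ^ 2 + p.2 ^ 2 : ℤ))⌋₊ ×ˢ intBall √(Y / (p.1 ^ 2 + p.2 ^ 2 : ℤ))

lemma exists_mem_chordParams {X Y : ℝ} {k₀ k₁ l₀ l₁ : ℤ} (hne : k₀ ≠ l₀ ∨ k₁ ≠ l₁)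
    (h : k₀ ^ 2 + k₁ ^ 2 = l₀ ^ 2 + l₁ ^ 2)
    (hX : (((k₀ - l₀) ^ 2 + (k₁ - l₁) ^ 2 : ℤ) : ℝ) ≤ X)
    (hY : ((4 * (k₀ ^ 2 + k₁ ^ 2) : ℤ) : ℝ) ≤ Y) :
    ∃ x ∈ chordParams X Y,
      4 * (k₀ ^ 2 + k₁ ^ 2) = ((x.2.1 : ℤ) ^ 2 + x.2.2 ^ 2) * (x.1.1 ^ 2 + x.1.2 ^ 2) := by
  obtain ⟨G, p₀, p₁, t, hG, hd₀, hd₁, hs₀, hs₁⟩ := exists_chord_decomposition hne h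
  set q : ℤ := p₀ ^ 2 + p₁ ^ 2
  have hdiff : (k₀ - l₀) ^ 2 + (k₁ - l₁) ^ 2 = G ^ 2 * q := by rw [hd₀, hd₁]; ring
  have hsum : (k₀ + l₀) ^ 2 + (k₁ + l₁) ^ 2 = t ^ 2 * q := by rw [hs₀, hs₁]; ring
  have hfour : 4 * (k₀ ^ 2 + k₁ ^ 2) = (G ^ 2 + t ^ 2) * q := by
    linear_combination hdiff + hsum + 2 * h
  have hq : 0 < q := by
    have : 0 < (k₀ - l₀) ^ 2 + (k₁ - l₁) ^ 2 := by
      rcases hne with h₀ | h₁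
      · nlinarith [sq_pos_of_ne_zero (sub_ne_zero.mpr h₀), sq_nonneg (k₁ - l₁)]
      · nlinarith [sq_pos_of_ne_zero (sub_ne_zero.mpr h₁), sq_nonneg (k₀ - l₀)]
    exact pos_of_mul_pos_right (hdiff ▸ this) (by positivity)
  have hqR : (0 : ℝ) < q := by exact_mod_cast hq
  have hGX : (G : ℝ) ^ 2 * q ≤ X := by rw [hdiff] at hX; exact_mod_cast hX
  have htY : (t : ℝ) ^ 2 * q ≤ Y := by
    refine le_trans ?_ hY
    exact_mod_cast (by nlinarith [sq_nonneg (G : ℤ)] : t ^ 2 * q ≤ 4 * (k₀ ^ 2 + k₁ ^ 2))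
  have hpX (p : ℤ) (hp : p ^ 2 ≤ q) : p ∈ intBall √X := by
    refine mem_intBall_sqrt_of_sq_le (le_trans ?_ hGX)
    have hG1 : (1 : ℤ) ≤ G := by exact_mod_cast hG
    exact_mod_cast hp.trans (le_mul_of_one_le_left hq.le (one_le_pow₀ hG1))
  refine ⟨⟨(p₀, p₁), (G, t)⟩, mem_sigma.mpr ⟨mem_product.mpr
    ⟨hpX p₀ (le_add_of_nonneg_right (sq_nonneg p₁)),
      hpX p₁ (le_add_of_nonneg_left (sq_nonneg p₀))⟩, mem_product.mpr ⟨?_, ?_⟩⟩, hfour⟩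
  · refine mem_Icc.mpr ⟨hG, Nat.le_floor ?_⟩
    exact Real.le_sqrt_of_sq_le ((le_div_iff₀ hqR).mpr hGX)
  · exact mem_intBall_sqrt_of_sq_le ((le_div_iff₀ hqR).mpr htY)

lemma card_chordParams_fiber_le {X Y : ℝ} (hXY : X ≤ Y) (p₀ p₁ : ℤ) :
    ((Icc 1 ⌊√(X / (p₀ ^ 2 + p₁ ^ 2 : ℤ))⌋₊ ×ˢ intBall √(Y / (p₀ ^ 2 + p₁ ^ 2 : ℤ))).card : ℝ) ≤
      3 * √X * √Y * ((max 1 |(p₀ : ℝ)|)⁻¹ * (max 1 |(p₁ : ℝ)|)⁻¹) := by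
  set q : ℝ := ((p₀ ^ 2 + p₁ ^ 2 : ℤ) : ℝ) with hq_def
  rw [card_product, Nat.card_Icc, Nat.add_sub_cancel, Nat.cast_mul]
  rcases Nat.eq_zero_or_pos ⌊√(X / q)⌋₊ with h0 | hpos
  · rw [h0, Nat.cast_zero, zero_mul]
    positivity
  have hXq : 1 ≤ X / q := by
    rw [← Real.one_le_sqrt]
    exact (Nat.one_le_cast.mpr hpos).trans (Nat.floor_le (Real.sqrt_nonneg _))
  have hq : 0 < q := lt_of_le_of_ne (by positivity) fun hq => by
    rw [← hq, div_zero] at hXq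
    norm_num at hXq
  have hp : p₀ ≠ 0 ∨ p₁ ≠ 0 := by
    by_contra! hp
    simp [q, hp.1, hp.2] at hq
  have hYq : 1 ≤ √(Y / q) :=
    Real.one_le_sqrt.mpr (hXq.trans (div_le_div_of_nonneg_right hXY hq.le))
  have hweight : q⁻¹ ≤ (max 1 |(p₀ : ℝ)|)⁻¹ * (max 1 |(p₁ : ℝ)|)⁻¹ := by
    rw [← mul_inv]
    refine inv_anti₀ (by positivity) ?_
    rw [hq_def]
    exact_mod_cast max_one_abs_mul_max_one_abs_le hp
  calc (⌊√(X / q)⌋₊ : ℝ) * ((intBall √(Y / q)).card : ℝ)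
      ≤ √(X / q) * (3 * √(Y / q)) :=
        mul_le_mul (Nat.floor_le (Real.sqrt_nonneg _))
          ((card_intBall_le (Real.sqrt_nonneg _)).trans (by linarith)) (by positivity)
          (Real.sqrt_nonneg _)
    _ = 3 * √X * √Y * q⁻¹ := by
        rw [Real.sqrt_div' _ hq.le, Real.sqrt_div' _ hq.le]
        field_simp
        rw [Real.sq_sqrt hq.le]
        ring
    _ ≤ 3 * √X * √Y * ((max 1 |(p₀ : ℝ)|)⁻¹ * (max 1 |(p₁ : ℝ)|)⁻¹) := by gcongr

lemma card_chordParams_le {X Y : ℝ} (hXY : X ≤ Y) :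
    ((chordParams X Y).card : ℝ) ≤ 3 * √X * √Y * (∑ a ∈ intBall √X, (max 1 |(a : ℝ)|)⁻¹) ^ 2 := by
  rw [chordParams, card_sigma, Nat.cast_sum, sq, sum_mul_sum, ← sum_product', mul_sum]
  exact sum_le_sum fun p _ => card_chordParams_fiber_le hXY p.1 p.2

lemma ncard_le_card_chordParams {δ : ℝ} (hδ : δ ≤ 1) (N : ℕ) :
    Set.ncard {E : ℕ | 1 ≤ E ∧ E ≤ N ∧ ∃ k l : Fin 2 → ℤ, k ≠ l ∧
        znorm k ^ 2 = E ∧ znorm l ^ 2 = E ∧ znorm (k - l) ≤ (E : ℝ) ^ ((1 - δ) / 2)} ≤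
      (chordParams ((N : ℝ) ^ (1 - δ)) (4 * N)).card := by
  classical
  let radiusSq : (Σ _ : ℤ × ℤ, ℕ × ℤ) → ℕ := fun x =>
    (((x.2.1 : ℤ) ^ 2 + x.2.2 ^ 2) * (x.1.1 ^ 2 + x.1.2 ^ 2)).toNat / 4
  refine (Set.ncard_le_ncard (t := ↑((chordParams _ _).image radiusSq)) ?_ (finite_toSet _)).trans
    ((Set.ncard_coe_finset _).trans_le card_image_le)
  rintro E ⟨-, hEN, k, l, hkl, hk, hl, hkl_le⟩
  rw [znorm_sq_fin_two] at hk hl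
  have hk' : k 0 ^ 2 + k 1 ^ 2 = E := by exact_mod_cast hk
  have hne : k 0 ≠ l 0 ∨ k 1 ≠ l 1 := by
    by_contra! h
    exact hkl (funext fun i => by fin_cases i <;> simp [h.1, h.2])
  have hX : (((k 0 - l 0) ^ 2 + (k 1 - l 1) ^ 2 : ℤ) : ℝ) ≤ (N : ℝ) ^ (1 - δ) := by
    calc (((k 0 - l 0) ^ 2 + (k 1 - l 1) ^ 2 : ℤ) : ℝ) = znorm (k - l) ^ 2 := by
          rw [znorm_sq_fin_two]; rfl
      _ ≤ ((E : ℝ) ^ ((1 - δ) / 2)) ^ 2 := by gcongr; exact Real.sqrt_nonneg _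
      _ = (E : ℝ) ^ (1 - δ) := by rw [← Real.rpow_natCast, ← Real.rpow_mul (by positivity)]; ring_nf
      _ ≤ (N : ℝ) ^ (1 - δ) := by gcongr
  have hY : ((4 * (k 0 ^ 2 + k 1 ^ 2) : ℤ) : ℝ) ≤ 4 * N := by
    rw [hk']; push_cast; exact_mod_cast Nat.mul_le_mul_left 4 hEN
  obtain ⟨x, hx, hx_eq⟩ := exists_mem_chordParams hne (by exact_mod_cast hk.trans hl.symm) hX hY
  refine mem_coe.mpr (mem_image.mpr ⟨x, hx, ?_⟩)
  simp only [radiusSq, ← hx_eq, hk']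
  omega

lemma sum_intBall_inv_max_one_abs_le {r ε : ℝ} {N : ℕ} (hN : 1 ≤ (N : ℝ)) (hr : r ≤ N)
    (hε : 0 < ε) : ∑ a ∈ intBall r, (max 1 |(a : ℝ)|)⁻¹ ≤ (3 + 2 / ε) * (N : ℝ) ^ ε :=
  calc _ ≤ ∑ a ∈ Icc (-(N : ℤ)) N, (max 1 |(a : ℝ)|)⁻¹ :=
        sum_le_sum_of_subset_of_nonneg (intBall_subset_Icc hr) fun _ _ _ => by positivity
    _ ≤ 3 + 2 * Real.log N := by
        rw [sum_Icc_inv_max_one_abs]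
        linarith [harmonic_le_one_add_log N]
    _ ≤ 3 * (N : ℝ) ^ ε + 2 * ((N : ℝ) ^ ε / ε) := by
        gcongr
        · exact le_mul_of_one_le_right (by norm_num) (Real.one_le_rpow hN hε.le)
        · exact Real.log_le_rpow_div (Nat.cast_nonneg N) hε
    _ = (3 + 2 / ε) * (N : ℝ) ^ ε := by ring

/-- Bourgain–Rudnick separation lemma for lattice points on circles. -/
theorem statement13 (δ : ℝ) (hδ0 : 0 < δ) (hδ1 : δ < 1) :
    ∃ C : ℝ, 0 < C ∧ ∀ N : ℕ, 0 < N →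
      (Set.ncard {E : ℕ | 1 ≤ E ∧ E ≤ N ∧ ∃ k l : Fin 2 → ℤ, k ≠ l ∧
          znorm k ^ 2 = E ∧ znorm l ^ 2 = E ∧
          znorm (k - l) ≤ (E : ℝ) ^ ((1 - δ) / 2)} : ℝ)
        ≤ C * (N : ℝ) ^ (1 - δ / 3) := by
  refine ⟨6 * (3 + 2 / (δ / 12)) ^ 2, by positivity, fun N hN => ?_⟩
  have hN1 : (1 : ℝ) ≤ N := by exact_mod_cast hN
  have hXN : (N : ℝ) ^ (1 - δ) ≤ N := Real.rpow_le_self_of_one_le hN1 (by linarith)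
  have hsqrtX : √((N : ℝ) ^ (1 - δ)) = (N : ℝ) ^ ((1 - δ) / 2) := by
    rw [Real.sqrt_eq_rpow, ← Real.rpow_mul (by positivity)]
    ring_nf
  have hsqrtY : √(4 * N) = 2 * (N : ℝ) ^ (1 / 2 : ℝ) := by
    rw [Real.sqrt_mul zero_le_four, show (4 : ℝ) = 2 ^ 2 by norm_num,
      Real.sqrt_sq zero_le_two, Real.sqrt_eq_rpow]
  have hpow : ((N : ℝ) ^ (δ / 12)) ^ 2 = (N : ℝ) ^ (δ / 6) := by
    rw [← Real.rpow_natCast, ← Real.rpow_mul (by positivity)]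
    ring_nf
  calc _ ≤ ((chordParams ((N : ℝ) ^ (1 - δ)) (4 * N)).card : ℝ) := by
        exact_mod_cast ncard_le_card_chordParams hδ1.le N
    _ ≤ 3 * √((N : ℝ) ^ (1 - δ)) * √(4 * N) *
          (∑ a ∈ intBall √((N : ℝ) ^ (1 - δ)), (max 1 |(a : ℝ)|)⁻¹) ^ 2 :=
        card_chordParams_le (by linarith)
    _ ≤ 3 * √((N : ℝ) ^ (1 - δ)) * √(4 * N) * ((3 + 2 / (δ / 12)) * (N : ℝ) ^ (δ / 12)) ^ 2 := by
        gcongr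
        exact sum_intBall_inv_max_one_abs_le hN1 (hsqrtX ▸ Real.rpow_le_self_of_one_le hN1
          (by linarith)) (by positivity)
    _ = 6 * (3 + 2 / (δ / 12)) ^ 2 * (N : ℝ) ^ (1 - δ / 3) := by
        rw [hsqrtX, hsqrtY, mul_pow, hpow, show 1 - δ / 3 = (1 - δ) / 2 + 1 / 2 + δ / 6 by ring,
          Real.rpow_add (by positivity), Real.rpow_add (by positivity)]
        ring
end
end
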